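/- arXiv:1611.05633 — 7 statements merged into one kernel-verified Lean document; each statement's English description precedes it below -/
import Mathlib

section
/- If a function f : Z_k^n → Z_k has at least two essential variables, then f has at least two strongly essential variables; that is, there exist two distinct essential variables x_i, x_j of f and constants c_i, c_j ∈ Z_k such that the set of essential variables of f(x_i := c_i) is Ess(f) \ {x_i} and the set of essential variables of f(x_j := c_j) is Ess(f) \ {x_j}. -/
open scoped Classical

/-- Variable `i` is essential in `f`. -/
def Essential {n k : ℕ} (f : (Fin n → ZMod k) → ZMod k) (i : Fin n) : Prop :=
  ∃ a b : Fin n → ZMod k, (∀ j : Fin n, j ≠ i → a j = b j) ∧ f a ≠ f b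

/-- The number of essential variables of `f`. -/
noncomputable def ess {n k : ℕ} (f : (Fin n → ZMod k) → ZMod k) : ℕ :=
  Nat.card {i : Fin n // Essential f i}

/-- The subfunction of `f` obtained by fixing the variables in `S` to the values given by `c`. -/
def restrictF {n k : ℕ} (f : (Fin n → ZMod k) → ZMod k) (S : Finset (Fin n))
    (c : Fin n → ZMod k) : (Fin n → ZMod k) → ZMod k :=
  fun a => f (fun j => if j ∈ S then c j else a j)

/-- `M` is a separable set of variables in `f`: some subfunction of `f` has exactly `M`
as its set of essential variables. -/
def Separable {n k : ℕ} (f : (Fin n → ZMod k) → ZMod k) (M : Set (Fin n)) : Prop :=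
  M.Nonempty ∧ ∃ (S : Finset (Fin n)) (c : Fin n → ZMod k),
    {i | Essential (restrictF f S c) i} = M

/-- The identification minor `f_{i←j}`: replace variable `x_i` by `x_j`. -/
def ident {n k : ℕ} (f : (Fin n → ZMod k) → ZMod k) (i j : Fin n) :
    (Fin n → ZMod k) → ZMod k :=
  fun a => f (Function.update a i (a j))

/-- `h` is a simple identification minor of `f` (written `f ▷ h`). -/
def SimpleMinor {n k : ℕ} (f h : (Fin n → ZMod k) → ZMod k) : Prop :=
  ∃ i j : Fin n, i ≠ j ∧ Essential f i ∧ Essential f j ∧ h = ident f i j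

/-- The essential arity gap of `f`. -/
noncomputable def gap {n k : ℕ} (f : (Fin n → ZMod k) → ZMod k) : ℕ :=
  ess f - sSup {m | ∃ h, SimpleMinor f h ∧ m = ess h}

section Helpers

variable {n k : ℕ}

lemma restrict_single (f : (Fin n → ZMod k) → ZMod k) (i : Fin n) (c : ZMod k)
    (a : Fin n → ZMod k) :
    restrictF f {i} (fun _ => c) a = f (Function.update a i c) := by
  unfold restrictF
  congr 1
  funext s
  rcases eq_or_ne s i with rfl | h
  · simp
  · simp [h]

lemma ess_restrict {f : (Fin n → ZMod k) → ZMod k} {i : Fin n} {c : ZMod k} {t : Fin n}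
    (h : Essential (restrictF f {i} (fun _ => c)) t) : Essential f t ∧ t ≠ i := by
  obtain ⟨a, b, hab, hne⟩ := h
  rw [restrict_single, restrict_single] at hne
  have hti : t ≠ i := by
    rintro rfl
    apply hne
    congr 1
    funext s
    rcases eq_or_ne s t with rfl | hs
    · simp
    · simp [Function.update_of_ne hs, hab s hs]
  refine ⟨⟨Function.update a i c, Function.update b i c, ?_, hne⟩, hti⟩
  intro s hs
  rcases eq_or_ne s i with rfl | hsi
  · simp
  · simp [Function.update_of_ne hsi, hab s hs]

lemma transfer {f : (Fin n → ZMod k) → ZMod k} {i j : Fin n} (hij : i ≠ j) {c : ZMod k}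
    (hj : ¬ Essential (restrictF f {i} (fun _ => c)) j) {t : Fin n}
    (ht : Essential (restrictF f {i} (fun _ => c)) t) (d : ZMod k) :
    Essential (restrictF f {j} (fun _ => d)) t := by
  have hj' : ∀ a b : Fin n → ZMod k, (∀ s, s ≠ j → a s = b s) →
      f (Function.update a i c) = f (Function.update b i c) := by
    intro a b hab
    by_contra hne
    exact hj ⟨a, b, hab, by rwa [restrict_single, restrict_single]⟩
  obtain ⟨a, b, hab, hne⟩ := ht
  rw [restrict_single, restrict_single] at hne
  have key : ∀ a : Fin n → ZMod k,
      f (Function.update (Function.update a i c) j d) = f (Function.update a i c) := by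
    intro a
    have h1 : Function.update (Function.update a i c) j d
        = Function.update (Function.update a j d) i c := Function.update_comm hij c d a
    rw [h1]
    exact (hj' a (Function.update a j d)
      (fun s hs => (Function.update_of_ne hs d a).symm)).symm
  refine ⟨Function.update a i c, Function.update b i c, ?_, ?_⟩
  · intro s hs
    rcases eq_or_ne s i with rfl | hsi
    · simp
    · simp [Function.update_of_ne hsi, hab s hs]
  · rw [restrict_single, restrict_single, key, key]
    exact hne

lemma slice_ess {f : (Fin n → ZMod k) → ZMod k} {j : Fin n} (hj : Essential f j)
    {t : Fin n} (htj : t ≠ j) :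
    ∃ e : ZMod k, Essential (restrictF f {t} (fun _ => e)) j := by
  obtain ⟨u, v, huv, hne⟩ := hj
  refine ⟨u t, u, v, huv, ?_⟩
  rw [restrict_single, restrict_single]
  have h1 : Function.update u t (u t) = u := Function.update_eq_self t u
  have h2 : Function.update v t (u t) = v := by
    rw [huv t htj]; exact Function.update_eq_self t v
  rw [h1, h2]; exact hne

noncomputable def Nc (f : (Fin n → ZMod k) → ZMod k) (i : Fin n) (c : ZMod k) : ℕ :=
  (Finset.univ.filter fun t => Essential (restrictF f {i} (fun _ => c)) t).card

lemma Nc_lt {f : (Fin n → ZMod k) → ZMod k} {i j : Fin n} {c d : ZMod k}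
    (h1 : ∀ s, Essential (restrictF f {i} (fun _ => c)) s →
      Essential (restrictF f {j} (fun _ => d)) s)
    (h2 : Essential (restrictF f {j} (fun _ => d)) i) :
    Nc f i c < Nc f j d := by
  apply Finset.card_lt_card
  have hsub : (Finset.univ.filter fun t => Essential (restrictF f {i} (fun _ => c)) t)
      ⊆ (Finset.univ.filter fun t => Essential (restrictF f {j} (fun _ => d)) t) := by
    intro s hs
    exact Finset.mem_filter.2 ⟨Finset.mem_univ _, h1 s (Finset.mem_filter.1 hs).2⟩
  rw [Finset.ssubset_iff_of_subset hsub]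
  exact ⟨i, Finset.mem_filter.2 ⟨Finset.mem_univ _, h2⟩,
    fun hmem => (ess_restrict (Finset.mem_filter.1 hmem).2).2 rfl⟩

lemma grow {f : (Fin n → ZMod k) → ZMod k} {i j : Fin n} {c : ZMod k}
    (hi : Essential f i) (hij : j ≠ i)
    (hkill : ¬ Essential (restrictF f {i} (fun _ => c)) j) :
    ∃ d : ZMod k, Essential (restrictF f {j} (fun _ => d)) i ∧
      ∀ s, Essential (restrictF f {i} (fun _ => c)) s →
        Essential (restrictF f {j} (fun _ => d)) s := by
  obtain ⟨d, hd⟩ := slice_ess hi hij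
  exact ⟨d, hd, fun s hs => transfer hij.symm hkill hs d⟩

lemma exists_max {f : (Fin n → ZMod k) → ZMod k} {P : Fin n → ZMod k → Prop}
    (hne : ∃ i c, P i c) :
    ∃ i c, P i c ∧ ∀ j d, P j d → Nc f j d ≤ Nc f i c := by
  set S : Set ℕ := {m | ∃ i c, P i c ∧ Nc f i c = m} with hS
  have hSne : S.Nonempty := by
    obtain ⟨i, c, h⟩ := hne
    exact ⟨Nc f i c, i, c, h, rfl⟩
  have hbdd : BddAbove S := by
    refine ⟨n, ?_⟩
    rintro m ⟨i, c, -, rfl⟩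
    calc Nc f i c ≤ (Finset.univ : Finset (Fin n)).card := Finset.card_filter_le _ _
    _ = n := by simp
  obtain ⟨i, c, hP, hN⟩ := Nat.sSup_mem hSne hbdd
  exact ⟨i, c, hP, fun j d hPj => hN ▸ le_csSup hbdd ⟨j, d, hPj, rfl⟩⟩

end Helpers

/-- If `f` has at least two essential variables, then it has at least two strongly
essential variables. -/
theorem stmt_0 {n k : ℕ} (hk : 2 ≤ k) (f : (Fin n → ZMod k) → ZMod k) (hf : 2 ≤ ess f) :
    ∃ i j : Fin n, i ≠ j ∧ Essential f i ∧ Essential f j ∧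
      (∃ ci : ZMod k,
        {t | Essential (restrictF f {i} (fun _ => ci)) t} = {t | Essential f t} \ {i}) ∧
      (∃ cj : ZMod k,
        {t | Essential (restrictF f {j} (fun _ => cj)) t} = {t | Essential f t} \ {j}) := by
  haveI : NeZero k := ⟨by omega⟩
  have hlt : 1 < Nat.card {i : Fin n // Essential f i} := hf
  rw [Nat.card_eq_fintype_card] at hlt
  have hpos : Nonempty {i : Fin n // Essential f i} :=
    Fintype.card_pos_iff.1 (by omega)
  obtain ⟨⟨i0, hi0⟩⟩ := hpos
  -- Step 1: a first strongly essential variable, via maximizing slice essentials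
  obtain ⟨i1, c1, hi1, hmax1⟩ :=
    exists_max (f := f) (P := fun i (_ : ZMod k) => Essential f i) ⟨i0, 0, hi0⟩
  have hfull1 : ∀ t, Essential (restrictF f {i1} (fun _ => c1)) t ↔
      Essential f t ∧ t ≠ i1 := by
    intro t
    constructor
    · exact ess_restrict
    · rintro ⟨ht, hti⟩
      by_contra hkill
      obtain ⟨d, hd1, hd2⟩ := grow hi1 hti hkill
      exact absurd (hmax1 t d ht) (not_le.2 (Nc_lt hd2 hd1))
  -- Step 2: a second strongly essential variable
  have second : ∃ j d, Essential f j ∧ j ≠ i1 ∧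
      ∀ t, Essential (restrictF f {j} (fun _ => d)) t ↔ Essential f t ∧ t ≠ j := by
    by_contra hno
    push_neg at hno
    have H2 : ∀ j d, Essential f j → j ≠ i1 →
        ∃ t, Essential f t ∧ t ≠ j ∧
          ¬ Essential (restrictF f {j} (fun _ => d)) t := by
      intro j d hj hji
      obtain ⟨t, hcase⟩ := hno j d hj hji
      rcases hcase with ⟨h1, h2⟩ | ⟨h1, h2, h3⟩
      · exact absurd (h2 (ess_restrict h1).1) (ess_restrict h1).2
      · exact ⟨t, h2, h3, h1⟩
    have hdom : ∃ j d, Essential f j ∧ j ≠ i1 ∧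
        Essential (restrictF f {j} (fun _ => d)) i1 := by
      obtain ⟨⟨j, hj⟩, hne⟩ := Fintype.exists_ne_of_one_lt_card hlt ⟨i1, hi1⟩
      have hji : j ≠ i1 := fun h => hne (Subtype.ext h)
      obtain ⟨e, he⟩ := slice_ess hi1 hji
      exact ⟨j, e, hj, hji, he⟩
    obtain ⟨j, d, ⟨hj, hji, hjd⟩, hmax2⟩ := exists_max (f := f)
      (P := fun j d => Essential f j ∧ j ≠ i1 ∧
        Essential (restrictF f {j} (fun _ => d)) i1) hdom
    obtain ⟨t, ht, htj, hkill⟩ := H2 j d hj hji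
    have hti1 : t ≠ i1 := fun h => hkill (h ▸ hjd)
    obtain ⟨e, he1, he2⟩ := grow hj htj hkill
    exact absurd (hmax2 t e ⟨ht, hti1, he2 i1 hjd⟩) (not_le.2 (Nc_lt he2 he1))
  obtain ⟨j, d, hj, hji, hfull2⟩ := second
  refine ⟨i1, j, Ne.symm hji, hi1, hj, ⟨c1, ?_⟩, ⟨d, ?_⟩⟩
  · ext t
    simp only [Set.mem_setOf_eq, Set.mem_diff, Set.mem_singleton_iff]
    exact hfull1 t
  · ext t
    simp only [Set.mem_setOf_eq, Set.mem_diff, Set.mem_singleton_iff]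
    exact hfull2 t
end

section
/- Let f : Z_k^n → Z_k and let N be a separable set of essential variables in f. Suppose that for each i ∈ {1,...,m} there exists a constant c_i ∈ Z_k such that the subfunction f(x_i := c_i) has no essential variable in N. Then for every non-empty subset M ⊆ {x_1,...,x_m}, the union M ∪ N is a separable set in f. -/
open scoped Classical

lemma not_essential_restrict {n k : ℕ} (f : (Fin n → ZMod k) → ZMod k)
    (S : Finset (Fin n)) (c : Fin n → ZMod k) (j : Fin n) (hj : j ∈ S) :
    ¬ Essential (restrictF f S c) j := by
  rintro ⟨a, b, hab, hne⟩
  apply hne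
  unfold restrictF
  congr 1
  funext p
  by_cases hp : p ∈ S
  · simp [hp]
  · simp only [hp, if_false]
    exact hab p (fun h => hp (h ▸ hj))

lemma nonessential_invariant {n k : ℕ} (g : (Fin n → ZMod k) → ZMod k) :
    ∀ (R : Finset (Fin n)), (∀ r ∈ R, ¬ Essential g r) →
      ∀ a b : Fin n → ZMod k, (∀ j, j ∉ R → a j = b j) → g a = g b := by
  intro R
  induction R using Finset.induction_on with
  | empty =>
    intro _ a b hab
    congr 1
    funext j
    exact hab j (by simp)
  | @insert r R hrR ih =>
    intro hR a b hab
    have hr : ¬ Essential g r := hR r (Finset.mem_insert_self r R)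
    unfold Essential at hr
    push_neg at hr
    have h1 : g a = g (Function.update a r (b r)) := by
      apply hr
      intro j hj
      rw [Function.update_of_ne hj]
    rw [h1]
    apply ih (fun r' hr' => hR r' (Finset.mem_insert_of_mem hr'))
    intro j hj
    by_cases hjr : j = r
    · subst hjr; simp
    · rw [Function.update_of_ne hjr]
      exact hab j (by simp [hjr, hj])

/-- If `N` is separable in `f` and for each `i ∈ T` some assignment to `x_i` kills all
essential variables in `N`, then `M ∪ N` is separable in `f` for every nonempty `M ⊆ T`. -/
theorem stmt_4 {n k : ℕ} (f : (Fin n → ZMod k) → ZMod k) (N : Set (Fin n))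
    (T : Finset (Fin n)) (hN : Separable f N)
    (hT : ∀ i ∈ T, ∃ c : ZMod k, ∀ j ∈ N, ¬ Essential (restrictF f {i} (fun _ => c)) j) :
    ∀ M : Set (Fin n), M.Nonempty → M ⊆ (T : Set (Fin n)) → Separable f (M ∪ N) := by
  intro M hMne hMT
  obtain ⟨hNne, S, c, hEss⟩ := hN
  set g := restrictF f S c with hg
  have hgess : ∀ i, Essential g i ↔ i ∈ N := by
    intro i; rw [← hEss]; rfl
  have hSN : ∀ j ∈ S, j ∉ N := fun j hj hjN =>
    not_essential_restrict f S c j hj ((hgess j).2 hjN)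
  classical
  set Sf : Finset (Fin n) := Finset.univ.filter (fun j => j ∉ M ∧ j ∉ N) with hSf
  set h := restrictF f Sf c with hh
  have hiSf : ∀ p, p ∈ M ∪ N → p ∉ Sf := by
    intro p hp hps
    simp only [hSf, Finset.mem_filter] at hps
    cases hp with
    | inl h' => exact hps.2.1 h'
    | inr h' => exact hps.2.2 h'
  -- key computation
  have key : ∀ a : Fin n → ZMod k,
      h (fun j => if j ∈ N then a j else c j) = g a := by
    intro a
    have h1 : g a = g (fun j => if j ∈ N then a j else c j) := by
      apply nonessential_invariant g (Finset.univ.filter (fun j => j ∉ N))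
      · intro r hr
        simp only [Finset.mem_filter] at hr
        exact fun he => hr.2 ((hgess r).1 he)
      · intro j hj
        simp only [Finset.mem_filter, Finset.mem_univ, true_and, not_not] at hj
        simp [hj]
    rw [h1]
    show restrictF f Sf c _ = restrictF f S c _
    unfold restrictF
    congr 1
    funext p
    by_cases hpN : p ∈ N
    · have h2 : p ∉ Sf := hiSf p (Or.inr hpN)
      have h3 : p ∉ S := fun hpS => hSN p hpS hpN
      simp [h2, h3, hpN]
    · by_cases hpS : p ∈ Sf <;> by_cases hpS' : p ∈ S <;> simp [hpS, hpS', hpN]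
  have hNess : ∀ j ∈ N, Essential h j := by
    intro j hjN
    obtain ⟨a, b, hab, hne⟩ := (hgess j).2 hjN
    refine ⟨fun p => if p ∈ N then a p else c p, fun p => if p ∈ N then b p else c p, ?_, ?_⟩
    · intro p hp
      by_cases hpN : p ∈ N <;> simp [hpN, hab p hp]
    · rw [key a, key b]; exact hne
  refine ⟨hNne.mono Set.subset_union_right, Sf, c, ?_⟩
  ext i
  simp only [Set.mem_setOf_eq, Set.mem_union]
  constructor
  · intro hi
    by_contra hcon
    push_neg at hcon
    have : i ∈ Sf := by simp [hSf, hcon.1, hcon.2]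
    exact not_essential_restrict f Sf c i this hi
  · rintro (hiM | hiN)
    · by_cases hiN : i ∈ N
      · exact hNess i hiN
      · obtain ⟨ci, hci⟩ := hT i (hMT hiM)
        by_contra hcon
        unfold Essential at hcon
        push_neg at hcon
        obtain ⟨j0, hj0⟩ := hNne
        apply hci j0 hj0
        obtain ⟨a, b, hab, hne⟩ := hNess j0 hj0
        have hiS : i ∉ Sf := hiSf i (Or.inl hiM)
        have e : ∀ x : Fin n → ZMod k,
            restrictF f {i} (fun _ => ci) (fun p => if p ∈ Sf then c p else x p)
              = h (Function.update x i ci) := by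
          intro x
          show _ = restrictF f Sf c _
          unfold restrictF
          congr 1
          funext p
          by_cases hpi : p = i
          · subst hpi; simp [hiS]
          · by_cases hpS : p ∈ Sf <;>
              simp [hpi, hpS, Function.update_of_ne hpi]
        refine ⟨fun p => if p ∈ Sf then c p else a p,
                fun p => if p ∈ Sf then c p else b p, ?_, ?_⟩
        · intro p hp
          by_cases hpS : p ∈ Sf <;> simp [hpS, hab p hp]
        · rw [e a, e b]
          have ea : h (Function.update a i ci) = h a := by
            apply hcon
            intro j hj
            rw [Function.update_of_ne hj]
          have eb : h (Function.update b i ci) = h b := by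
            apply hcon
            intro j hj
            rw [Function.update_of_ne hj]
          rw [ea, eb]
          exact hne
    · exact hNess i hiN
end

section
/- Let f : Z_k^n → Z_k and let x_i, x_j be distinct essential variables of f. If there exists a constant c ∈ Z_k such that the subfunction f(x_i := c) does not essentially depend on x_j, then the set {x_i, x_j} is separable in f. -/
open scoped Classical

/-- If assigning some constant to `x_i` makes `x_j` inessential, then `{x_i, x_j}` is a
separable set in `f`. -/
theorem stmt_5 {n k : ℕ} (f : (Fin n → ZMod k) → ZMod k) (i j : Fin n) (hij : i ≠ j)
    (hi : Essential f i) (hj : Essential f j)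
    (h : ∃ c : ZMod k, ¬ Essential (restrictF f {i} (fun _ => c)) j) :
    Separable f {i, j} := by
  obtain ⟨c, hc⟩ := h
  obtain ⟨a, b, hab, hfab⟩ := hj
  unfold Essential at hc
  push_neg at hc
  have hres : ∀ x : Fin n → ZMod k,
      restrictF f {i} (fun _ => c) x = f (Function.update x i c) := by
    intro x
    unfold restrictF
    congr 1
    funext m
    by_cases hm : m = i
    · subst hm; simp
    · simp [hm, Function.update_of_ne hm]
  have key : f (Function.update a i c) = f (Function.update b i c) := by
    have := hc a b hab
    rwa [hres, hres] at this
  set S : Finset (Fin n) := ({i, j} : Finset (Fin n))ᶜ with hS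
  have memS : ∀ m, m ∈ S ↔ m ≠ i ∧ m ≠ j := by
    intro m; simp [hS]
  set g := restrictF f S a with hg
  have hcomp : ∀ x : Fin n → ZMod k, (∀ m ∈ S, x m = a m) → g x = f x := by
    intro x hx
    show f _ = f x
    congr 1
    funext m
    by_cases hm : m ∈ S
    · simp [hm, (hx m hm).symm]
    · simp [hm]
  have ga : g a = f a := hcomp a (fun m _ => rfl)
  have gb : g b = f b := by
    refine hcomp b fun m hm => ?_
    exact (hab m ((memS m).1 hm).2).symm
  have gac : g (Function.update a i c) = f (Function.update a i c) := by
    refine hcomp _ fun m hm => ?_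
    exact Function.update_of_ne ((memS m).1 hm).1 _ _
  have gbc : g (Function.update b i c) = f (Function.update b i c) := by
    refine hcomp _ fun m hm => ?_
    rw [Function.update_of_ne ((memS m).1 hm).1]
    exact (hab m ((memS m).1 hm).2).symm
  have essj : Essential g j := ⟨a, b, hab, by rw [ga, gb]; exact hfab⟩
  have essi : Essential g i := by
    by_cases h1 : f (Function.update a i c) = f a
    · refine ⟨b, Function.update b i c, fun m hm => (Function.update_of_ne hm _ _).symm, ?_⟩
      rw [gb, gbc, ← key, h1]
      exact fun e => hfab e.symm
    · refine ⟨a, Function.update a i c, fun m hm => (Function.update_of_ne hm _ _).symm, ?_⟩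
      rw [ga, gac]
      exact fun e => h1 e.symm
  refine ⟨⟨i, by simp⟩, S, a, ?_⟩
  ext l
  simp only [Set.mem_setOf_eq, Set.mem_insert_iff, Set.mem_singleton_iff]
  constructor
  · intro hl
    by_contra hli
    push_neg at hli
    have hlS : l ∈ S := (memS l).2 hli
    obtain ⟨x, y, hxy, hgxy⟩ := hl
    apply hgxy
    show f _ = f _
    congr 1
    funext m
    by_cases hm : m ∈ S
    · simp [hm]
    · have : m ≠ l := fun e => hm (e ▸ hlS)
      simp [hm, hxy m this]
  · rintro (rfl | rfl)
    · exact essi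
    · exact essj
end

section
/- For every Boolean function f : Z_2^n → Z_2 with n ≥ 2, if gap(f) = 2 and n ≥ 5, then f is one of the two functions f(x₁,...,xₙ) = x₁ ⊕ ... ⊕ xₙ or f(x₁,...,xₙ) = x₁ ⊕ ... ⊕ xₙ ⊕ 1 (equivalently, f equals the sum over all tuples with coordinate-sum ≡ 1 (mod 2), or with coordinate-sum ≡ 0 (mod 2), of the corresponding indicator monomials); in either case every non-empty subset of {x₁,...,xₙ} is separable in f. -/
open scoped Classical

namespace Stmt7Aux

variable {n : ℕ}

/-- flip the `i`-th coordinate -/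
def fl (i : Fin n) (x : Fin n → ZMod 2) : Fin n → ZMod 2 :=
  Function.update x i (x i + 1)

lemma z2_ne {a b : ZMod 2} (h : a ≠ b) : a = b + 1 := by revert h; revert a b; decide

lemma z2_aa (a : ZMod 2) : a + 1 + 1 = a := by revert a; decide

lemma z2_cases (a b : ZMod 2) : a = b ∨ a = b + 1 := by revert a b; decide

@[simp] lemma fl_same (i : Fin n) (x : Fin n → ZMod 2) : fl i x i = x i + 1 :=
  Function.update_self _ _ _

lemma fl_ne {i j : Fin n} (h : j ≠ i) (x : Fin n → ZMod 2) : fl i x j = x j :=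
  Function.update_of_ne h _ _

lemma fl_fl (i : Fin n) (x : Fin n → ZMod 2) : fl i (fl i x) = x := by
  funext t
  rcases eq_or_ne t i with rfl | h
  · rw [fl_same, fl_same, z2_aa]
  · rw [fl_ne h, fl_ne h]

lemma fl_comm {i j : Fin n} (h : i ≠ j) (x : Fin n → ZMod 2) :
    fl i (fl j x) = fl j (fl i x) := by
  funext t
  rcases eq_or_ne t i with rfl | hti
  · rw [fl_same, fl_ne h, fl_ne h, fl_same]
  · rcases eq_or_ne t j with rfl | htj
    · rw [fl_ne hti, fl_same, fl_same, fl_ne hti]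
    · rw [fl_ne hti, fl_ne htj, fl_ne htj, fl_ne hti]

/-- `P` condition: flipping `i` and `j` simultaneously from an aligned point preserves `f`. -/
def Pc (f : (Fin n → ZMod 2) → ZMod 2) (i j : Fin n) : Prop :=
  ∀ x, x i = x j → f (fl i (fl j x)) = f x

/-- `Q` condition: on points where `x i = x j`, `f` does not depend on `x r`. -/
def Qc (f : (Fin n → ZMod 2) → ZMod 2) (i j r : Fin n) : Prop :=
  ∀ x, x i = x j → f (fl r x) = f x

lemma Qc_symm {f : (Fin n → ZMod 2) → ZMod 2} {i j r : Fin n} (h : Qc f i j r) :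
    Qc f j i r := fun x hx => h x hx.symm

lemma Pc_symm {f : (Fin n → ZMod 2) → ZMod 2} {i j : Fin n} (hij : i ≠ j) (h : Pc f i j) :
    Pc f j i := fun x hx => by rw [fl_comm (Ne.symm hij)]; exact h x hx.symm

lemma essential_iff_fl {f : (Fin n → ZMod 2) → ZMod 2} {i : Fin n} :
    Essential f i ↔ ∃ x, f (fl i x) ≠ f x := by
  constructor
  · rintro ⟨a, b, hab, hne⟩
    rcases eq_or_ne (b i) (a i) with h | h
    · exact absurd (congrArg f (funext fun j => by
        rcases eq_or_ne j i with rfl | hj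
        · exact h.symm
        · exact hab j hj)) hne
    · refine ⟨a, ?_⟩
      have hb : b = fl i a := funext fun j => by
        rcases eq_or_ne j i with rfl | hj
        · rw [fl_same]; exact z2_ne h
        · rw [fl_ne hj]; exact (hab j hj).symm
      rw [← hb]; exact fun h' => hne h'.symm
  · rintro ⟨x, hx⟩
    exact ⟨fl i x, x, fun j hj => fl_ne hj x, hx⟩

lemma not_essential_iff {f : (Fin n → ZMod 2) → ZMod 2} {i : Fin n} :
    (¬ Essential f i) ↔ ∀ x, f (fl i x) = f x := by
  constructor
  · intro h x
    by_contra hne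
    exact h (essential_iff_fl.mpr ⟨x, hne⟩)
  · intro h he
    obtain ⟨x, hx⟩ := essential_iff_fl.mp he
    exact hx (h x)

lemma all_essential {f : (Fin n → ZMod 2) → ZMod 2} (hess : ess f = n) :
    ∀ i, Essential f i := by
  intro i
  by_contra hi
  have hlt := Fintype.card_subtype_lt (p := Essential f) (x := i) hi
  rw [ess, Nat.card_eq_fintype_card] at hess
  rw [Fintype.card_fin] at hlt
  omega

lemma ess_le {g : (Fin n → ZMod 2) → ZMod 2} : ess g ≤ n := by
  rw [ess, Nat.card_eq_fintype_card]
  simpa using Fintype.card_subtype_le (Essential g)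

lemma bound_from_gap {f : (Fin n → ZMod 2) → ZMod 2} (hess : ess f = n)
    (hgap : gap f = 2) : ∀ h, SimpleMinor f h → ess h ≤ n - 2 := by
  intro h hh
  have hBdd : BddAbove {m | ∃ h, SimpleMinor f h ∧ m = ess h} := by
    refine ⟨n, ?_⟩
    rintro m ⟨h', _, rfl⟩
    exact ess_le
  have hle : ess h ≤ sSup {m | ∃ h, SimpleMinor f h ∧ m = ess h} :=
    le_csSup hBdd ⟨h, hh, rfl⟩
  rw [gap, hess] at hgap
  omega

lemma ident_not_ess_left {f : (Fin n → ZMod 2) → ZMod 2} {i j : Fin n} (hij : i ≠ j) :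
    ¬ Essential (ident f i j) i := by
  rw [not_essential_iff]
  intro x
  show f _ = f _
  congr 1
  funext t
  rcases eq_or_ne t i with rfl | hti
  · rw [Function.update_self, Function.update_self, fl_ne (Ne.symm hij)]
  · rw [Function.update_of_ne hti, Function.update_of_ne hti, fl_ne hti]

lemma pair_cond {f : (Fin n → ZMod 2) → ZMod 2}
    (hall : ∀ i, Essential f i)
    (hbound : ∀ h, SimpleMinor f h → ess h ≤ n - 2) {i j : Fin n} (hij : i ≠ j) :
    Pc f i j ∨ ∃ r, r ≠ i ∧ r ≠ j ∧ Qc f i j r := by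
  have hle : ess (ident f i j) ≤ n - 2 :=
    hbound _ ⟨i, j, hij, hall i, hall j, rfl⟩
  have hex : ∃ v, v ≠ i ∧ ¬ Essential (ident f i j) v := by
    by_contra hc
    push_neg at hc
    have hmono := Fintype.card_subtype_mono (fun v : Fin n => ¬ (v = i))
      (Essential (ident f i j)) (fun v hv => hc v hv)
    rw [Fintype.card_subtype_compl, Fintype.card_subtype_eq, Fintype.card_fin] at hmono
    rw [ess, Nat.card_eq_fintype_card] at hle
    have hn1 : 0 < n := i.pos
    omega
  obtain ⟨v, hvi, hv⟩ := hex
  rw [not_essential_iff] at hv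
  rcases eq_or_ne v j with hvj' | hvj
  · subst hvj'
    left
    intro x hx
    have hfix : Function.update x i (x i) = x := by
      funext t
      rcases eq_or_ne t i with rfl | ht
      · rw [Function.update_self]
      · rw [Function.update_of_ne ht]
    have key2 : Function.update (fl v x) i ((fl v x) v) = fl i (fl v x) := by
      funext t
      rcases eq_or_ne t i with rfl | hti
      · rw [Function.update_self, fl_same, fl_same, fl_ne hij, hx]
      · rw [Function.update_of_ne hti, fl_ne hti]
    have hthis := hv x
    unfold ident at hthis
    rw [key2] at hthis
    rw [hx] at hfix
    rw [hfix] at hthis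
    exact hthis
  · right
    refine ⟨v, hvi, hvj, ?_⟩
    intro x hx
    have hfix : Function.update x i (x j) = x := by
      funext t
      rcases eq_or_ne t i with rfl | ht
      · rw [Function.update_self]; exact hx.symm
      · rw [Function.update_of_ne ht]
    have key : Function.update (fl v x) i ((fl v x) j) = fl v x := by
      funext t
      rcases eq_or_ne t i with rfl | hti
      · rw [Function.update_self, fl_ne (Ne.symm hvj), fl_ne (Ne.symm hvi)]
        exact hx.symm
      · rw [Function.update_of_ne hti]
    have hthis := hv x
    unfold ident at hthis
    rw [key, hfix] at hthis
    exact hthis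

end Stmt7Aux
namespace Stmt7Aux

variable {n : ℕ} {f : (Fin n → ZMod 2) → ZMod 2}

lemma ne_flip' {a b : ZMod 2} (h : ¬ a = b) : a = b + 1 := by
  revert h; revert a b; decide

lemma z2_add_right {a b : ZMod 2} (h : a = b) : a + 1 = b + 1 := by rw [h]

/-- conjugation: transport invariance under `fl r` across a flip of `w`. -/
lemma conj {w r : Fin n} (hrw : r ≠ w) {x : Fin n → ZMod 2}
    (hx : f (fl r x) = f x) (hfx : f (fl r (fl w x)) = f (fl w x))
    (hrec : f (fl w (fl r x)) = f (fl r x)) : f (fl w x) = f x := by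
  rw [← hfx, fl_comm hrw, hrec, hx]

lemma conj2 {w i j : Fin n} (hiw : i ≠ w) (hjw : j ≠ w) {x : Fin n → ZMod 2}
    (hx : f (fl i (fl j x)) = f x) (hfx : f (fl i (fl j (fl w x))) = f (fl w x))
    (hrec : f (fl w (fl i (fl j x))) = f (fl i (fl j x))) : f (fl w x) = f x := by
  rw [← hfx, fl_comm hjw, fl_comm hiw, hrec, hx]

section Leaves

variable {p q k m m1 m2 w : Fin n}

/-- Case 12: `P p k` together with `Q q k p` makes `p` inessential. -/
lemma aux2 (hpq : p ≠ q) (hpk : p ≠ k) (hqk : q ≠ k)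
    (HQ : Qc f p q k) (HP : Pc f p k) (HR : Qc f q k p) :
    ∀ x, f (fl p x) = f x := by
  intro x
  by_cases hbc : x q = x k
  · exact HR x hbc
  by_cases hac : x p = x k
  · have h1 : f (fl k (fl p x)) = f (fl p x) := by
      refine HQ (fl p x) ?_
      rw [fl_same, fl_ne hpq.symm, ne_flip' hbc, hac]
    have h2 : f (fl p (fl k x)) = f x := HP x hac
    calc f (fl p x) = f (fl k (fl p x)) := h1.symm
      _ = f (fl p (fl k x)) := by rw [fl_comm hpk.symm]
      _ = f x := h2
  · have hab : x p = x q := by rw [ne_flip' hac, ne_flip' hbc]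
    have h1 : f (fl p (fl k (fl p x))) = f (fl p x) := by
      refine HP (fl p x) ?_
      rw [fl_same, fl_ne hpk.symm, ne_flip' hac, z2_aa]
    have h2 : fl p (fl k (fl p x)) = fl k x := by rw [fl_comm hpk, fl_fl]
    have h3 : f (fl k x) = f x := HQ x hab
    rw [h2] at h1
    rw [← h1, h3]

/-- Case 13: `P p k` together with `Q q k m` (m new) makes `m` inessential. -/
lemma aux3 (hpq : p ≠ q) (hpk : p ≠ k) (hqk : q ≠ k)
    (hmp : m ≠ p) (hmq : m ≠ q) (hmk : m ≠ k)
    (HQ : Qc f p q k) (HP : Pc f p k) (HM : Qc f q k m) :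
    ∀ x, f (fl m x) = f x := by
  intro x
  by_cases hbc : x q = x k
  · exact HM x hbc
  by_cases hac : x p = x k
  · have hPx : f (fl p (fl k (fl m x))) = f (fl m x) := by
      refine HP (fl m x) ?_
      rw [fl_ne hmp.symm, fl_ne hmk.symm]; exact hac
    have hMy : f (fl m (fl p (fl k x))) = f (fl p (fl k x)) := by
      refine HM (fl p (fl k x)) ?_
      rw [fl_ne hpq.symm, fl_ne hqk, fl_ne hpk.symm, fl_same]
      exact ne_flip' hbc
    have hPx2 : f (fl p (fl k x)) = f x := HP x hac
    calc f (fl m x) = f (fl p (fl k (fl m x))) := hPx.symm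
      _ = f (fl m (fl p (fl k x))) := by rw [fl_comm hmk.symm, fl_comm hmp.symm]
      _ = f (fl p (fl k x)) := hMy
      _ = f x := hPx2
  · have hab : x p = x q := by rw [ne_flip' hac, ne_flip' hbc]
    refine conj (show k ≠ m from hmk.symm) (HQ x hab) ?_ ?_
    · refine HQ (fl m x) ?_
      rw [fl_ne hmp.symm, fl_ne hmq.symm]; exact hab
    · refine HM (fl k x) ?_
      rw [fl_ne hqk, fl_same]; exact ne_flip' hbc

/-- Case 23: `Q p k q` together with `Q q k m` (m new) makes `m` inessential. -/
lemma aux5 (hpq : p ≠ q) (hpk : p ≠ k) (hqk : q ≠ k)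
    (hmp : m ≠ p) (hmq : m ≠ q) (hmk : m ≠ k)
    (HQ : Qc f p q k) (HB : Qc f p k q) (HM : Qc f q k m) :
    ∀ x, f (fl m x) = f x := by
  intro x
  by_cases hbc : x q = x k
  · exact HM x hbc
  by_cases hac : x p = x k
  · refine conj (show q ≠ m from hmq.symm) (HB x hac) ?_ ?_
    · refine HB (fl m x) ?_
      rw [fl_ne hmp.symm, fl_ne hmk.symm]; exact hac
    · refine HM (fl q x) ?_
      rw [fl_same, fl_ne hqk.symm, ne_flip' hbc, z2_aa]
  · have hab : x p = x q := by rw [ne_flip' hac, ne_flip' hbc]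
    refine conj (show k ≠ m from hmk.symm) (HQ x hab) ?_ ?_
    · refine HQ (fl m x) ?_
      rw [fl_ne hmp.symm, fl_ne hmq.symm]; exact hab
    · refine HM (fl k x) ?_
      rw [fl_ne hqk, fl_same]; exact ne_flip' hbc

/-- Case 33 with equal witnesses: `Q p k m` and `Q q k m` make `m` inessential. -/
lemma aux6eq (hpq : p ≠ q) (hpk : p ≠ k) (hqk : q ≠ k)
    (hmp : m ≠ p) (hmq : m ≠ q) (hmk : m ≠ k)
    (HQ : Qc f p q k) (H1 : Qc f p k m) (H2 : Qc f q k m) :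
    ∀ x, f (fl m x) = f x := by
  intro x
  by_cases hbc : x q = x k
  · exact H2 x hbc
  by_cases hac : x p = x k
  · exact H1 x hac
  · have hab : x p = x q := by rw [ne_flip' hac, ne_flip' hbc]
    refine conj (show k ≠ m from hmk.symm) (HQ x hab) ?_ ?_
    · refine HQ (fl m x) ?_
      rw [fl_ne hmp.symm, fl_ne hmq.symm]; exact hab
    · refine H1 (fl k x) ?_
      rw [fl_ne hpk, fl_same]; exact ne_flip' hac

/-- the `a = b` navigation: from `Q p q k` and `Q q k m2`, flipping `m2` is free
whenever `x p = x q` and `x q ≠ x k`. -/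
lemma abQ (hpq : p ≠ q) (hqk : q ≠ k)
    (hm2p : m2 ≠ p) (hm2q : m2 ≠ q) (hm2k : m2 ≠ k)
    (HQ : Qc f p q k) (H2 : Qc f q k m2) :
    ∀ y, y p = y q → ¬ y q = y k → f (fl m2 y) = f y := by
  intro y hab hbc
  refine conj (show k ≠ m2 from hm2k.symm) (HQ y hab) ?_ ?_
  · refine HQ (fl m2 y) ?_
    rw [fl_ne hm2p.symm, fl_ne hm2q.symm]; exact hab
  · refine H2 (fl k y) ?_
    rw [fl_ne hqk, fl_same]; exact ne_flip' hbc

/-- skeleton for case 33, pair {k,m1} subcases: given the invariance on the hard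
pattern (`y p = y k ≠ y q`, `y m1 = y k`), conclude `m2` inessential. -/
lemma aux6skel (hpq : p ≠ q) (hpk : p ≠ k) (hqk : q ≠ k)
    (h1p : m1 ≠ p) (h1q : m1 ≠ q) (h1k : m1 ≠ k)
    (h2p : m2 ≠ p) (h2q : m2 ≠ q) (h2k : m2 ≠ k) (h12 : m1 ≠ m2)
    (HQ : Qc f p q k) (H1 : Qc f p k m1) (H2 : Qc f q k m2)
    (key : ∀ y, y p = y k → ¬ y q = y k → y m1 = y k → f (fl m2 y) = f y) :
    ∀ x, f (fl m2 x) = f x := by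
  intro x
  by_cases hbc : x q = x k
  · exact H2 x hbc
  by_cases hab : x p = x q
  · exact abQ hpq hqk h2p h2q h2k HQ H2 x hab hbc
  have hac : x p = x k := by
    rw [ne_flip' hab, ne_flip' hbc, z2_aa]
  by_cases hcu : x m1 = x k
  · exact key x hac hbc hcu
  · refine conj (show m1 ≠ m2 from h12) (H1 x hac) ?_ ?_
    · refine H1 (fl m2 x) ?_
      rw [fl_ne h2p.symm, fl_ne h2k.symm]; exact hac
    · refine key (fl m1 x) ?_ ?_ ?_
      · rw [fl_ne h1p.symm, fl_ne h1k.symm]; exact hac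
      · rw [fl_ne h1q.symm, fl_ne h1k.symm]; exact hbc
      · rw [fl_same, fl_ne h1k.symm, ne_flip' hcu, z2_aa]

/-- key for case 33(i): `P k m1`. -/
lemma aux6key_i (hpq : p ≠ q) (hpk : p ≠ k) (hqk : q ≠ k)
    (h1p : m1 ≠ p) (h1q : m1 ≠ q) (h1k : m1 ≠ k)
    (h2p : m2 ≠ p) (h2q : m2 ≠ q) (h2k : m2 ≠ k) (h12 : m1 ≠ m2)
    (H2 : Qc f q k m2) (HPk1 : Pc f k m1) :
    ∀ y, y p = y k → ¬ y q = y k → y m1 = y k → f (fl m2 y) = f y := by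
  intro y hac hbc hcu
  refine conj2 (show k ≠ m2 from h2k.symm) (show m1 ≠ m2 from h12)
    (HPk1 y hcu.symm) ?_ ?_
  · refine HPk1 (fl m2 y) ?_
    rw [fl_ne h2k.symm, fl_ne (show m1 ≠ m2 from h12)]; exact hcu.symm
  · refine H2 (fl k (fl m1 y)) ?_
    rw [fl_ne hqk, fl_ne h1q.symm, fl_same, fl_ne h1k.symm]
    exact ne_flip' hbc

/-- key for case 33(ii): `Q k m1 p`. -/
lemma aux6key_ii (hpq : p ≠ q) (hpk : p ≠ k) (hqk : q ≠ k)
    (h1p : m1 ≠ p) (h1q : m1 ≠ q) (h1k : m1 ≠ k)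
    (h2p : m2 ≠ p) (h2q : m2 ≠ q) (h2k : m2 ≠ k) (h12 : m1 ≠ m2)
    (HQ : Qc f p q k) (H2 : Qc f q k m2) (HK1p : Qc f k m1 p) :
    ∀ y, y p = y k → ¬ y q = y k → y m1 = y k → f (fl m2 y) = f y := by
  intro y hac hbc hcu
  refine conj (show p ≠ m2 from h2p.symm) (HK1p y hcu.symm) ?_ ?_
  · refine HK1p (fl m2 y) ?_
    rw [fl_ne h2k.symm, fl_ne (show m1 ≠ m2 from h12)]; exact hcu.symm
  · refine abQ hpq hqk h2p h2q h2k HQ H2 (fl p y) ?_ ?_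
    · rw [fl_same, fl_ne hpq.symm]
      have hne : ¬ y q = y p := fun h => hbc (h.trans hac)
      exact (ne_flip' hne).symm
    · rw [fl_ne hpq.symm, fl_ne hpk.symm]; exact hbc

/-- key for case 33(iii): `Q k m1 q`. -/
lemma aux6key_iii (hpq : p ≠ q) (hpk : p ≠ k) (hqk : q ≠ k)
    (h1p : m1 ≠ p) (h1q : m1 ≠ q) (h1k : m1 ≠ k)
    (h2p : m2 ≠ p) (h2q : m2 ≠ q) (h2k : m2 ≠ k) (h12 : m1 ≠ m2)
    (H2 : Qc f q k m2) (HK1q : Qc f k m1 q) :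
    ∀ y, y p = y k → ¬ y q = y k → y m1 = y k → f (fl m2 y) = f y := by
  intro y hac hbc hcu
  refine conj (show q ≠ m2 from h2q.symm) (HK1q y hcu.symm) ?_ ?_
  · refine HK1q (fl m2 y) ?_
    rw [fl_ne h2k.symm, fl_ne (show m1 ≠ m2 from h12)]; exact hcu.symm
  · refine H2 (fl q y) ?_
    rw [fl_same, fl_ne hqk.symm, ne_flip' hbc, z2_aa]

/-- key for case 33(iv): `Q k m1 m2`. -/
lemma aux6key_iv (h12 : m1 ≠ m2)
    (HK12 : Qc f k m1 m2) :
    ∀ y, y p = y k → ¬ y q = y k → y m1 = y k → f (fl m2 y) = f y := by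
  intro y _ _ hcu
  exact HK12 y hcu.symm

end Leaves

end Stmt7Aux
namespace Stmt7Aux

variable {n : ℕ} {f : (Fin n → ZMod 2) → ZMod 2}
variable {p q k m m1 m2 w : Fin n}

/-- Case 33(v-a): `P m1 m2` makes `m1` inessential. -/
lemma aux6va (hpq : p ≠ q) (hpk : p ≠ k) (hqk : q ≠ k)
    (h1p : m1 ≠ p) (h1q : m1 ≠ q) (h1k : m1 ≠ k)
    (h2p : m2 ≠ p) (h2q : m2 ≠ q) (h2k : m2 ≠ k) (h12 : m1 ≠ m2)
    (HQ : Qc f p q k) (H1 : Qc f p k m1) (H2 : Qc f q k m2) (HP12 : Pc f m1 m2) :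
    ∀ x, f (fl m1 x) = f x := by
  intro x
  by_cases hac : x p = x k
  · exact H1 x hac
  by_cases hab : x p = x q
  · refine conj (show k ≠ m1 from h1k.symm) (HQ x hab) ?_ ?_
    · refine HQ (fl m1 x) ?_
      rw [fl_ne h1p.symm, fl_ne h1q.symm]; exact hab
    · refine H1 (fl k x) ?_
      rw [fl_ne hpk, fl_same]; exact ne_flip' hac
  · have hbc : x q = x k := by
      have e1 : x q = x p + 1 := ne_flip' (fun h => hab h.symm)
      have e2 : x k = x p + 1 := ne_flip' (fun h => hac h.symm)
      rw [e1, e2]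
    by_cases huv : x m1 = x m2
    · have h1' : f (fl m2 (fl m1 x)) = f (fl m1 x) := by
        refine H2 (fl m1 x) ?_
        rw [fl_ne h1q.symm, fl_ne h1k.symm]; exact hbc
      have h2' : f (fl m1 (fl m2 x)) = f x := HP12 x huv
      rw [← h1', fl_comm (show m2 ≠ m1 from h12.symm), h2']
    · have h2' : f (fl m1 (fl m2 (fl m2 x))) = f (fl m2 x) := by
        refine HP12 (fl m2 x) ?_
        rw [fl_ne h12, fl_same]; exact ne_flip' huv
      rw [fl_fl] at h2'
      rw [h2']
      exact H2 x hbc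

/-- Case 33(v-b): `Q m1 m2 p` makes `k` inessential. -/
lemma aux6vb (hpq : p ≠ q) (hpk : p ≠ k) (hqk : q ≠ k)
    (h1p : m1 ≠ p) (h1q : m1 ≠ q) (h1k : m1 ≠ k)
    (h2p : m2 ≠ p) (h2q : m2 ≠ q) (h2k : m2 ≠ k) (h12 : m1 ≠ m2)
    (HQ : Qc f p q k) (H1 : Qc f p k m1) (H2 : Qc f q k m2) (H12p : Qc f m1 m2 p) :
    ∀ x, f (fl k x) = f x := by
  have aligned : ∀ y, ¬ y p = y q → y m1 = y m2 → f (fl k y) = f y := by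
    intro y hab huv
    have h1 : f (fl p y) = f y := H12p y huv
    have h2 : f (fl k (fl p y)) = f (fl p y) := by
      refine HQ (fl p y) ?_
      rw [fl_same, fl_ne hpq.symm]
      exact (ne_flip' (fun h => hab h.symm)).symm
    have h3 : f (fl p (fl k y)) = f (fl k y) := by
      refine H12p (fl k y) ?_
      rw [fl_ne h1k, fl_ne h2k]; exact huv
    calc f (fl k y) = f (fl p (fl k y)) := h3.symm
      _ = f (fl k (fl p y)) := by rw [fl_comm hpk]
      _ = f (fl p y) := h2
      _ = f y := h1
  intro x
  by_cases hab : x p = x q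
  · exact HQ x hab
  by_cases huv : x m1 = x m2
  · exact aligned x hab huv
  by_cases hac : x p = x k
  · -- pattern a = c ≠ b, m-coordinates unaligned
    have hbc : ¬ x q = x k := fun h => hab (hac.trans h.symm)
    calc f (fl k x)
        = f (fl m2 (fl k x)) := by
          refine (H2 (fl k x) ?_).symm
          rw [fl_ne hqk, fl_same]; exact ne_flip' hbc
      _ = f (fl k (fl m2 x)) := by rw [fl_comm h2k]
      _ = f (fl p (fl k (fl m2 x))) := by
          refine (H12p (fl k (fl m2 x)) ?_).symm
          rw [fl_ne h1k, fl_ne h12, fl_ne h2k, fl_same]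
          exact ne_flip' huv
      _ = f (fl m1 (fl p (fl k (fl m2 x)))) := by
          refine (H1 (fl p (fl k (fl m2 x))) ?_).symm
          rw [fl_same, fl_ne hpk, fl_ne h2p.symm, fl_ne hpk.symm, fl_same, fl_ne h2k.symm]
          exact z2_add_right hac
      _ = f (fl m2 (fl m1 (fl p (fl k (fl m2 x))))) := by
          refine (H2 (fl m1 (fl p (fl k (fl m2 x)))) ?_).symm
          rw [fl_ne h1q.symm, fl_ne hpq.symm, fl_ne hqk, fl_ne h2q.symm,
            fl_ne h1k.symm, fl_ne hpk.symm, fl_same, fl_ne h2k.symm]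
          exact ne_flip' hbc
      _ = f (fl k (fl p (fl m1 x))) := by
          rw [fl_comm (show m2 ≠ m1 from h12.symm), fl_comm h2p, fl_comm h2k, fl_fl,
            fl_comm h1p, fl_comm h1k, fl_comm hpk]
      _ = f (fl p (fl m1 x)) := by
          refine HQ (fl p (fl m1 x)) ?_
          rw [fl_same, fl_ne h1p.symm, fl_ne hpq.symm, fl_ne h1q.symm]
          exact (ne_flip' (fun h => hab h.symm)).symm
      _ = f (fl m1 x) := by
          refine H12p (fl m1 x) ?_
          rw [fl_same, fl_ne h12.symm]
          exact (ne_flip' (fun h => huv h.symm)).symm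
      _ = f x := H1 x hac
  · -- pattern b = c ≠ a, m-coordinates unaligned
    have hbc : x q = x k := by
      have e1 : x q = x p + 1 := ne_flip' (fun h => hab h.symm)
      have e2 : x k = x p + 1 := ne_flip' (fun h => hac h.symm)
      rw [e1, e2]
    have hpk' : ¬ x p = x k := hac
    calc f (fl k x)
        = f (fl m1 (fl k x)) := by
          refine (H1 (fl k x) ?_).symm
          rw [fl_ne hpk, fl_same]; exact ne_flip' hac
      _ = f (fl k (fl m1 x)) := by rw [fl_comm h1k]
      _ = f (fl p (fl k (fl m1 x))) := by
          refine (H12p (fl k (fl m1 x)) ?_).symm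
          rw [fl_ne h1k, fl_same, fl_ne h2k, fl_ne h12.symm]
          exact (ne_flip' (fun h => huv h.symm)).symm
      _ = f (fl k (fl p (fl m1 x))) := by rw [fl_comm hpk]
      _ = f (fl p (fl m1 x)) := by
          refine HQ (fl p (fl m1 x)) ?_
          rw [fl_same, fl_ne h1p.symm, fl_ne hpq.symm, fl_ne h1q.symm]
          rw [ne_flip' hab, z2_aa]
      _ = f (fl m2 (fl p (fl m1 x))) := by
          refine (H2 (fl p (fl m1 x)) ?_).symm
          rw [fl_ne hpq.symm, fl_ne h1q.symm, fl_ne hpk.symm, fl_ne h1k.symm]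
          exact hbc
      _ = f (fl m1 (fl m2 (fl p (fl m1 x)))) := by
          refine (H1 (fl m2 (fl p (fl m1 x))) ?_).symm
          rw [fl_ne h2p.symm, fl_same, fl_ne h1p.symm, fl_ne h2k.symm, fl_ne hpk.symm,
            fl_ne h1k.symm]
          exact (ne_flip' (fun h => hpk' h.symm)).symm
      _ = f (fl p (fl m2 x)) := by
          rw [fl_comm h12, fl_comm h1p, fl_fl, fl_comm h2p]
      _ = f (fl m2 x) := by
          refine H12p (fl m2 x) ?_
          rw [fl_ne h12, fl_same]
          exact ne_flip' huv
      _ = f x := H2 x hbc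

/-- Case 33(v-d): `Q k m1 w` with `Q m1 m2 k` makes `w` inessential. -/
lemma aux6vd (hpq : p ≠ q) (hpk : p ≠ k) (hqk : q ≠ k)
    (h1p : m1 ≠ p) (h1q : m1 ≠ q) (h1k : m1 ≠ k)
    (h2p : m2 ≠ p) (h2q : m2 ≠ q) (h2k : m2 ≠ k) (h12 : m1 ≠ m2)
    (hwp : w ≠ p) (hwq : w ≠ q) (hwk : w ≠ k) (hw1 : w ≠ m1) (hw2 : w ≠ m2)
    (HQ : Qc f p q k) (H1 : Qc f p k m1) (H2 : Qc f q k m2)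
    (HK1w : Qc f k m1 w) (H12k : Qc f m1 m2 k) :
    ∀ x, f (fl w x) = f x := by
  intro x
  by_cases hcu : x k = x m1
  · exact HK1w x hcu
  by_cases hab : x p = x q
  · refine conj (show k ≠ w from hwk.symm) (HQ x hab) ?_ ?_
    · refine HQ (fl w x) ?_
      rw [fl_ne hwp.symm, fl_ne hwq.symm]; exact hab
    · refine HK1w (fl k x) ?_
      rw [fl_same, fl_ne h1k]
      exact (ne_flip' (fun h => hcu h.symm)).symm
  by_cases hac : x p = x k
  · refine conj (show m1 ≠ w from hw1.symm) (H1 x hac) ?_ ?_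
    · refine H1 (fl w x) ?_
      rw [fl_ne hwp.symm, fl_ne hwk.symm]; exact hac
    · refine HK1w (fl m1 x) ?_
      rw [fl_ne h1k.symm, fl_same]
      exact ne_flip' hcu
  · have hbc : x q = x k := by
      have e1 : x q = x p + 1 := ne_flip' (fun h => hab h.symm)
      have e2 : x k = x p + 1 := ne_flip' (fun h => hac h.symm)
      rw [e1, e2]
    by_cases huv : x m1 = x m2
    · refine conj (show k ≠ w from hwk.symm) (H12k x huv) ?_ ?_
      · refine H12k (fl w x) ?_
        rw [fl_ne hw1.symm, fl_ne hw2.symm]; exact huv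
      · refine HK1w (fl k x) ?_
        rw [fl_same, fl_ne h1k]
        exact (ne_flip' (fun h => hcu h.symm)).symm
    · refine conj (show m2 ≠ w from hw2.symm) (H2 x hbc) ?_ ?_
      · refine H2 (fl w x) ?_
        rw [fl_ne hwq.symm, fl_ne hwk.symm]; exact hbc
      · refine conj (show k ≠ w from hwk.symm) ?_ ?_ ?_
        · refine H12k (fl m2 x) ?_
          rw [fl_ne h12, fl_same]; exact ne_flip' huv
        · refine H12k (fl w (fl m2 x)) ?_
          rw [fl_ne hw1.symm, fl_ne h12, fl_ne hw2.symm, fl_same]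
          exact ne_flip' huv
        · refine HK1w (fl k (fl m2 x)) ?_
          rw [fl_same, fl_ne h2k.symm, fl_ne h1k, fl_ne h12]
          exact (ne_flip' (fun h => hcu h.symm)).symm

/-- Case 33(v-e): `Q m1 m2 w` (w new) makes `w` inessential. -/
lemma aux6ve (hpq : p ≠ q) (hpk : p ≠ k) (hqk : q ≠ k)
    (h1p : m1 ≠ p) (h1q : m1 ≠ q) (h1k : m1 ≠ k)
    (h2p : m2 ≠ p) (h2q : m2 ≠ q) (h2k : m2 ≠ k) (h12 : m1 ≠ m2)
    (hwp : w ≠ p) (hwq : w ≠ q) (hwk : w ≠ k) (hw1 : w ≠ m1) (hw2 : w ≠ m2)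
    (HQ : Qc f p q k) (H1 : Qc f p k m1) (H2 : Qc f q k m2)
    (H12w : Qc f m1 m2 w) :
    ∀ x, f (fl w x) = f x := by
  have stepA : ∀ y, y p = y k → f (fl w y) = f y := by
    intro y hac
    by_cases huv : y m1 = y m2
    · exact H12w y huv
    · refine conj (show m1 ≠ w from hw1.symm) (H1 y hac) ?_ ?_
      · refine H1 (fl w y) ?_
        rw [fl_ne hwp.symm, fl_ne hwk.symm]; exact hac
      · refine H12w (fl m1 y) ?_
        rw [fl_same, fl_ne h12.symm]
        exact (ne_flip' (fun h => huv h.symm)).symm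
  have stepB : ∀ y, y q = y k → f (fl w y) = f y := by
    intro y hbc
    by_cases huv : y m1 = y m2
    · exact H12w y huv
    · refine conj (show m2 ≠ w from hw2.symm) (H2 y hbc) ?_ ?_
      · refine H2 (fl w y) ?_
        rw [fl_ne hwq.symm, fl_ne hwk.symm]; exact hbc
      · refine H12w (fl m2 y) ?_
        rw [fl_ne h12, fl_same]; exact ne_flip' huv
  intro x
  by_cases hac : x p = x k
  · exact stepA x hac
  by_cases hbc : x q = x k
  · exact stepB x hbc
  · have hab : x p = x q := by
      rw [ne_flip' hac, ne_flip' hbc]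
    refine conj (show k ≠ w from hwk.symm) (HQ x hab) ?_ ?_
    · refine HQ (fl w x) ?_
      rw [fl_ne hwp.symm, fl_ne hwq.symm]; exact hab
    · refine stepA (fl k x) ?_
      rw [fl_ne hpk, fl_same]; exact ne_flip' hac

end Stmt7Aux
namespace Stmt7Aux

variable {n : ℕ} {f : (Fin n → ZMod 2) → ZMod 2}
variable {p q k m r : Fin n}

/-- From `Q p q k` and `P k m`: flipping `m` is free on `x p = x q`. -/
lemma F1gen (hpq : p ≠ q) (hmp : m ≠ p) (hmq : m ≠ q) (hmk : m ≠ k)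
    (HQ : Qc f p q k) (HPkm : Pc f k m) :
    ∀ y, y p = y q → f (fl m y) = f y := by
  intro y hab
  by_cases hkm : y k = y m
  · have h1 := HPkm y hkm
    have h2 : f (fl k (fl m y)) = f (fl m y) := by
      refine HQ (fl m y) ?_
      rw [fl_ne hmp.symm, fl_ne hmq.symm]; exact hab
    rw [h2] at h1; exact h1
  · have h1 : f (fl k (fl m (fl m y))) = f (fl m y) := by
      refine HPkm (fl m y) ?_
      rw [fl_ne hmk.symm, fl_same]; exact ne_flip' hkm
    rw [fl_fl] at h1
    rw [← h1]
    exact HQ y hab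

/-- From `Q p q k` and `Q k m r`:  flipping `r` is free on `x p = x q`. -/
lemma coreQ (hrp : r ≠ p) (hrq : r ≠ q) (hrk : r ≠ k) (hmk : m ≠ k)
    (HQ : Qc f p q k) (HKMr : Qc f k m r) :
    ∀ y, y p = y q → f (fl r y) = f y := by
  intro y hab
  by_cases hkm : y k = y m
  · exact HKMr y hkm
  · refine conj (show k ≠ r from hrk.symm) (HQ y hab) ?_ ?_
    · refine HQ (fl r y) ?_
      rw [fl_ne hrp.symm, fl_ne hrq.symm]; exact hab
    · refine HKMr (fl k y) ?_
      rw [fl_same, fl_ne hmk]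
      exact (ne_flip' (fun h => hkm h.symm)).symm

section Aux1

/-- In case 11, if the `AB` connection holds then `k` is inessential. -/
lemma aux1_k (hpq : p ≠ q) (hpk : p ≠ k) (hqk : q ≠ k)
    (HQ : Qc f p q k) (HPpk : Pc f p k) (HPqk : Pc f q k)
    (AB : ∀ y, y p = y q → y p = y k → f (fl p (fl q y)) = f y) :
    ∀ x, f (fl k x) = f x := by
  intro x
  by_cases hab : x p = x q
  · exact HQ x hab
  by_cases hbc : x q = x k
  · have h2 : f (fl p (fl k (fl k x))) = f (fl k x) := by
      refine HPpk (fl k x) ?_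
      rw [fl_ne hpk, fl_same, ne_flip' hab, hbc]
    rw [fl_fl] at h2
    have h3 : f (fl p (fl q (fl p x))) = f (fl p x) := by
      refine AB (fl p x) ?_ ?_
      · rw [fl_same, fl_ne hpq.symm, ne_flip' hab, z2_aa]
      · rw [fl_same, fl_ne hpk.symm, ne_flip' hab, hbc, z2_aa]
    rw [fl_comm hpq, fl_fl] at h3
    have h4 : f (fl k (fl q x)) = f (fl q x) := by
      refine HQ (fl q x) ?_
      rw [fl_ne hpq, fl_same]; exact ne_flip' hab
    have h1 : f (fl q (fl k x)) = f x := HPqk x hbc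
    calc f (fl k x) = f (fl p x) := h2.symm
      _ = f (fl q x) := h3.symm
      _ = f (fl k (fl q x)) := h4.symm
      _ = f (fl q (fl k x)) := by rw [fl_comm (show k ≠ q from hqk.symm)]
      _ = f x := h1
  · have hac : x p = x k := by
      have e2 : x k = x q + 1 := ne_flip' (fun h => hbc h.symm)
      rw [ne_flip' hab, e2]
    have h1 : f (fl q (fl k (fl k x))) = f (fl k x) := by
      refine HPqk (fl k x) ?_
      rw [fl_ne hqk, fl_same]; exact ne_flip' hbc
    rw [fl_fl] at h1
    have h2 : f (fl p (fl q (fl q x))) = f (fl q x) := by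
      refine AB (fl q x) ?_ ?_
      · rw [fl_ne hpq, fl_same]; exact ne_flip' hab
      · rw [fl_ne hpq, fl_ne hqk.symm]; exact hac
    rw [fl_fl] at h2
    have h3 : f (fl k (fl p x)) = f (fl p x) := by
      refine HQ (fl p x) ?_
      rw [fl_same, fl_ne hpq.symm, ne_flip' hab, z2_aa]
    have h4 : f (fl p (fl k x)) = f x := HPpk x hac
    calc f (fl k x) = f (fl q x) := h1.symm
      _ = f (fl p x) := h2.symm
      _ = f (fl k (fl p x)) := h3.symm
      _ = f (fl p (fl k x)) := by rw [fl_comm (show k ≠ p from hpk.symm)]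
      _ = f x := h4

/-- Case 11, subcase `P k m`: the `AB` connection. -/
lemma aux1_AB1 (hpq : p ≠ q) (hpk : p ≠ k) (hqk : q ≠ k)
    (hmp : m ≠ p) (hmq : m ≠ q) (hmk : m ≠ k)
    (HQ : Qc f p q k) (HPpk : Pc f p k) (HPqk : Pc f q k)
    (HPkm : Pc f k m) :
    ∀ y, y p = y q → y p = y k → f (fl p (fl q y)) = f y := by
  have F1 : ∀ y, y p = y q → f (fl m y) = f y := F1gen hpq hmp hmq hmk HQ HPkm
  have ABal : ∀ y, y p = y q → y p = y k → y m = y k →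
      f (fl p (fl q y)) = f y := by
    intro y hab hac hmc
    have s1 : f (fl k (fl p (fl q y))) = f (fl p (fl q y)) := by
      refine HQ (fl p (fl q y)) ?_
      rw [fl_same, fl_ne hpq, fl_ne hpq.symm, fl_same]
      exact z2_add_right hab
    have s2 : f (fl q (fl k (fl k (fl p (fl q y))))) = f (fl k (fl p (fl q y))) := by
      refine HPqk (fl k (fl p (fl q y))) ?_
      rw [fl_ne hqk, fl_ne hpq.symm, fl_same, fl_same, fl_ne hpk.symm, fl_ne hqk.symm]
      exact z2_add_right (hab.symm.trans hac)
    rw [fl_fl, fl_comm (show q ≠ p from hpq.symm), fl_fl] at s2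
    have s3 : f (fl k (fl m (fl p y))) = f (fl p y) := by
      refine HPkm (fl p y) ?_
      rw [fl_ne hpk.symm, fl_ne hmp]
      exact hmc.symm
    have s4 : f (fl p (fl k (fl k (fl m (fl p y))))) = f (fl k (fl m (fl p y))) := by
      refine HPpk (fl k (fl m (fl p y))) ?_
      rw [fl_ne hpk, fl_ne hmp.symm, fl_same, fl_same, fl_ne hmk.symm, fl_ne hpk.symm]
      exact z2_add_right hac
    rw [fl_fl, fl_comm (show p ≠ m from hmp.symm), fl_fl] at s4
    calc f (fl p (fl q y)) = f (fl k (fl p (fl q y))) := s1.symm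
      _ = f (fl p y) := s2.symm
      _ = f (fl k (fl m (fl p y))) := s3.symm
      _ = f (fl m y) := s4.symm
      _ = f y := F1 y hab
  intro y hab hac
  by_cases hmc : y m = y k
  · exact ABal y hab hac hmc
  · have t1 : f (fl m (fl p (fl q y))) = f (fl p (fl q y)) := by
      refine F1 (fl p (fl q y)) ?_
      rw [fl_same, fl_ne hpq, fl_ne hpq.symm, fl_same]
      exact z2_add_right hab
    have t2 : f (fl p (fl q (fl m y))) = f (fl m y) := by
      refine ABal (fl m y) ?_ ?_ ?_
      · rw [fl_ne hmp.symm, fl_ne hmq.symm]; exact hab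
      · rw [fl_ne hmp.symm, fl_ne hmk.symm]; exact hac
      · rw [fl_same, fl_ne hmk.symm, ne_flip' hmc, z2_aa]
    calc f (fl p (fl q y)) = f (fl m (fl p (fl q y))) := t1.symm
      _ = f (fl p (fl q (fl m y))) := by rw [fl_comm hmp, fl_comm hmq]
      _ = f (fl m y) := t2
      _ = f y := F1 y hab

/-- Case 11, subcase `Q k m p`: the `AB` connection. -/
lemma aux1_AB2 (hpq : p ≠ q) (hpk : p ≠ k) (hqk : q ≠ k)
    (hmp : m ≠ p) (hmq : m ≠ q) (hmk : m ≠ k)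
    (HQ : Qc f p q k) (HPpk : Pc f p k) (HPqk : Pc f q k)
    (HKMp : Qc f k m p) :
    ∀ y, y p = y q → y p = y k → f (fl p (fl q y)) = f y := by
  intro y hab hac
  by_cases hsm : y m = y k
  · have c1 : f (fl p y) = f y := HKMp y hsm.symm
    have c2 : f (fl q (fl k (fl p y))) = f (fl p y) := by
      refine HPqk (fl p y) ?_
      rw [fl_ne hpq.symm, fl_ne hpk.symm]
      exact hab.symm.trans hac
    have c3 : f (fl k (fl p (fl q y))) = f (fl p (fl q y)) := by
      refine HQ (fl p (fl q y)) ?_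
      rw [fl_same, fl_ne hpq, fl_ne hpq.symm, fl_same]
      exact z2_add_right hab
    calc f (fl p (fl q y)) = f (fl k (fl p (fl q y))) := c3.symm
      _ = f (fl q (fl k (fl p y))) := by
          rw [fl_comm (show q ≠ k from hqk), fl_comm (show q ≠ p from hpq.symm)]
      _ = f (fl p y) := c2
      _ = f y := c1
  · have g3 : f (fl q (fl k y)) = f y := HPqk y (hab.symm.trans hac)
    have g2 : f (fl p (fl q (fl k y))) = f (fl q (fl k y)) := by
      refine HKMp (fl q (fl k y)) ?_
      rw [fl_ne hqk.symm, fl_same, fl_ne hmq, fl_ne hmk]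
      exact (ne_flip' hsm).symm
    have g1 : f (fl k (fl p (fl q y))) = f (fl p (fl q y)) := by
      refine HQ (fl p (fl q y)) ?_
      rw [fl_same, fl_ne hpq, fl_ne hpq.symm, fl_same]
      exact z2_add_right hab
    calc f (fl p (fl q y)) = f (fl k (fl p (fl q y))) := g1.symm
      _ = f (fl p (fl q (fl k y))) := by
          rw [fl_comm (show k ≠ p from hpk.symm), fl_comm (show k ≠ q from hqk.symm)]
      _ = f (fl q (fl k y)) := g2
      _ = f y := g3

/-- Case 11, subcase `Q k m q`: by symmetry. -/
lemma aux1_AB3 (hpq : p ≠ q) (hpk : p ≠ k) (hqk : q ≠ k)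
    (hmp : m ≠ p) (hmq : m ≠ q) (hmk : m ≠ k)
    (HQ : Qc f p q k) (HPpk : Pc f p k) (HPqk : Pc f q k)
    (HKMq : Qc f k m q) :
    ∀ y, y p = y q → y p = y k → f (fl p (fl q y)) = f y := by
  intro y hab hac
  have h := aux1_AB2 hpq.symm hqk hpk hmq hmp hmk (Qc_symm HQ) HPqk HPpk HKMq y
    hab.symm (hab.symm.trans hac)
  rw [fl_comm (show q ≠ p from hpq.symm)] at h
  exact h

/-- Case 11, subcase `Q k m r` (r new): `r` is inessential. -/
lemma aux1_r {r : Fin n} (hpq : p ≠ q) (hpk : p ≠ k) (hqk : q ≠ k)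
    (hmp : m ≠ p) (hmq : m ≠ q) (hmk : m ≠ k)
    (hrp : r ≠ p) (hrq : r ≠ q) (hrk : r ≠ k)
    (HQ : Qc f p q k) (HPpk : Pc f p k) (HPqk : Pc f q k)
    (HKMr : Qc f k m r) :
    ∀ x, f (fl r x) = f x := by
  have core : ∀ y, y p = y q → f (fl r y) = f y := coreQ hrp hrq hrk hmk HQ HKMr
  intro x
  by_cases hab : x p = x q
  · exact core x hab
  by_cases hbc : x q = x k
  · refine conj2 (show q ≠ r from hrq.symm) (show k ≠ r from hrk.symm)
      (HPqk x hbc) ?_ ?_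
    · refine HPqk (fl r x) ?_
      rw [fl_ne hrq.symm, fl_ne hrk.symm]; exact hbc
    · refine core (fl q (fl k x)) ?_
      rw [fl_ne hpq, fl_ne hpk, fl_same, fl_ne hqk]
      exact ne_flip' hab
  · have hac : x p = x k := by
      have e2 : x k = x q + 1 := ne_flip' (fun h => hbc h.symm)
      rw [ne_flip' hab, e2]
    refine conj2 (show p ≠ r from hrp.symm) (show k ≠ r from hrk.symm)
      (HPpk x hac) ?_ ?_
    · refine HPpk (fl r x) ?_
      rw [fl_ne hrp.symm, fl_ne hrk.symm]; exact hac
    · refine core (fl p (fl k x)) ?_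
      rw [fl_same, fl_ne hpk, fl_ne hpq.symm, fl_ne hqk]
      exact (ne_flip' (fun h => hab h.symm)).symm

end Aux1

section Aux4

/-- In case 22, if the `AB4` connection holds then `k` is inessential. -/
lemma aux4_k (hpq : p ≠ q) (hpk : p ≠ k) (hqk : q ≠ k)
    (HQ : Qc f p q k) (HB : Qc f p k q) (HC : Qc f q k p)
    (AB4 : ∀ y, y p = y q → y q = y k → f (fl p (fl q (fl k y))) = f y) :
    ∀ x, f (fl k x) = f x := by
  intro x
  by_cases hab : x p = x q
  · exact HQ x hab
  by_cases hbc : x q = x k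
  · have h1 : f (fl p x) = f x := HC x hbc
    have h2 : f (fl q (fl k x)) = f (fl k x) := by
      refine HB (fl k x) ?_
      rw [fl_ne hpk, fl_same, ne_flip' hab, hbc]
    have h3 : f (fl p (fl q (fl k (fl p x)))) = f (fl p x) := by
      refine AB4 (fl p x) ?_ ?_
      · rw [fl_same, fl_ne hpq.symm]
        exact (ne_flip' (fun h => hab h.symm)).symm
      · rw [fl_ne hpq.symm, fl_ne hpk.symm]; exact hbc
    rw [fl_comm hpq, fl_comm hpk, fl_fl] at h3
    rw [h2] at h3
    rw [h3, h1]
  · have hac : x p = x k := by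
      have e2 : x k = x q + 1 := ne_flip' (fun h => hbc h.symm)
      rw [ne_flip' hab, e2]
    have e : x q = x p + 1 := ne_flip' (fun h => hab h.symm)
    have h1 : f (fl q x) = f x := HB x hac
    have h2 : f (fl p (fl k x)) = f (fl k x) := by
      refine HC (fl k x) ?_
      rw [fl_ne hqk, fl_same, e, hac]
    have h3 : f (fl p (fl q (fl k (fl q x)))) = f (fl q x) := by
      refine AB4 (fl q x) ?_ ?_
      · rw [fl_ne hpq, fl_same]; exact ne_flip' hab
      · rw [fl_same, fl_ne hqk.symm, e, hac, z2_aa]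
    rw [fl_comm hqk, fl_fl] at h3
    rw [h2] at h3
    rw [h3, h1]

/-- Case 22, subcase `P k m`: the `AB4` connection. -/
lemma aux4_AB1 (hpq : p ≠ q) (hpk : p ≠ k) (hqk : q ≠ k)
    (hmp : m ≠ p) (hmq : m ≠ q) (hmk : m ≠ k)
    (HQ : Qc f p q k) (HB : Qc f p k q) (HC : Qc f q k p)
    (HPkm : Pc f k m) :
    ∀ y, y p = y q → y q = y k → f (fl p (fl q (fl k y))) = f y := by
  have F1 : ∀ y, y p = y q → f (fl m y) = f y := F1gen hpq hmp hmq hmk HQ HPkm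
  have ABal : ∀ y, y p = y q → y q = y k → y m = y k →
      f (fl p (fl q (fl k y))) = f y := by
    intro y hab hbc hmc
    have c1 : f (fl p (fl p y)) = f (fl p y) := by
      refine HC (fl p y) ?_
      rw [fl_ne hpq.symm, fl_ne hpk.symm]; exact hbc
    rw [fl_fl] at c1
    have c2 : f (fl k (fl m (fl p y))) = f (fl p y) := by
      refine HPkm (fl p y) ?_
      rw [fl_ne hpk.symm, fl_ne hmp]
      exact hmc.symm
    have c3 : f (fl q (fl k (fl m (fl p y)))) = f (fl k (fl m (fl p y))) := by
      refine HB (fl k (fl m (fl p y))) ?_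
      rw [fl_ne hpk, fl_ne hmp.symm, fl_same, fl_same, fl_ne hmk.symm, fl_ne hpk.symm]
      exact z2_add_right (hab.trans hbc)
    have c4 : f (fl m (fl q (fl k (fl m (fl p y))))) = f (fl q (fl k (fl m (fl p y)))) := by
      refine F1 (fl q (fl k (fl m (fl p y)))) ?_
      rw [fl_ne hpq, fl_ne hpk, fl_ne hmp.symm, fl_same, fl_same, fl_ne hqk,
        fl_ne hmq.symm, fl_ne hpq.symm]
      exact z2_add_right hab
    rw [fl_comm hmq, fl_comm hmk, fl_fl, fl_comm (show k ≠ p from hpk.symm),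
      fl_comm (show q ≠ p from hpq.symm)] at c4
    calc f (fl p (fl q (fl k y))) = f (fl q (fl k (fl m (fl p y)))) := c4
      _ = f (fl k (fl m (fl p y))) := c3
      _ = f (fl p y) := c2
      _ = f y := c1.symm
  intro y hab hbc
  by_cases hmc : y m = y k
  · exact ABal y hab hbc hmc
  · have t1 : f (fl m (fl p (fl q (fl k y)))) = f (fl p (fl q (fl k y))) := by
      refine F1 (fl p (fl q (fl k y))) ?_
      rw [fl_same, fl_ne hpq, fl_ne hpk, fl_ne hpq.symm, fl_same, fl_ne hqk]
      exact z2_add_right hab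
    have t2 : f (fl p (fl q (fl k (fl m y)))) = f (fl m y) := by
      refine ABal (fl m y) ?_ ?_ ?_
      · rw [fl_ne hmp.symm, fl_ne hmq.symm]; exact hab
      · rw [fl_ne hmq.symm, fl_ne hmk.symm]; exact hbc
      · rw [fl_same, fl_ne hmk.symm, ne_flip' hmc, z2_aa]
    calc f (fl p (fl q (fl k y))) = f (fl m (fl p (fl q (fl k y)))) := t1.symm
      _ = f (fl p (fl q (fl k (fl m y)))) := by
          rw [fl_comm hmp, fl_comm hmq, fl_comm hmk]
      _ = f (fl m y) := t2
      _ = f y := F1 y hab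

/-- Case 22, subcase `Q k m p`: the `AB4` connection. -/
lemma aux4_AB2 (hpq : p ≠ q) (hpk : p ≠ k) (hqk : q ≠ k)
    (hmp : m ≠ p) (hmq : m ≠ q) (hmk : m ≠ k)
    (HQ : Qc f p q k) (HB : Qc f p k q) (HC : Qc f q k p)
    (HKMp : Qc f k m p) :
    ∀ y, y p = y q → y q = y k → f (fl p (fl q (fl k y))) = f y := by
  intro y hab hbc
  by_cases hsm : y m = y k
  · have c1 : f (fl q (fl q y)) = f (fl q y) := by
      refine HB (fl q y) ?_
      rw [fl_ne hpq, fl_ne hqk.symm]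
      exact hab.trans hbc
    rw [fl_fl] at c1
    have c2 : f (fl p (fl q y)) = f (fl q y) := by
      refine HKMp (fl q y) ?_
      rw [fl_ne hqk.symm, fl_ne hmq]
      exact hsm.symm
    have c3 : f (fl k (fl p (fl q y))) = f (fl p (fl q y)) := by
      refine HQ (fl p (fl q y)) ?_
      rw [fl_same, fl_ne hpq, fl_ne hpq.symm, fl_same]
      exact z2_add_right hab
    calc f (fl p (fl q (fl k y))) = f (fl k (fl p (fl q y))) := by
          rw [fl_comm (show q ≠ k from hqk), fl_comm (show p ≠ k from hpk)]
      _ = f (fl p (fl q y)) := c3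
      _ = f (fl q y) := c2
      _ = f y := c1.symm
  · have c1 : f (fl k y) = f y := HQ y hab
    have c2 : f (fl p (fl k y)) = f (fl k y) := by
      refine HKMp (fl k y) ?_
      rw [fl_same, fl_ne hmk]
      exact (ne_flip' hsm).symm
    have c3 : f (fl q (fl p (fl k y))) = f (fl p (fl k y)) := by
      refine HB (fl p (fl k y)) ?_
      rw [fl_same, fl_ne hpk, fl_ne hpk.symm, fl_same]
      exact z2_add_right (hab.trans hbc)
    calc f (fl p (fl q (fl k y))) = f (fl q (fl p (fl k y))) := by rw [fl_comm hpq]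
      _ = f (fl p (fl k y)) := c3
      _ = f (fl k y) := c2
      _ = f y := c1

/-- Case 22, subcase `Q k m q`: by symmetry. -/
lemma aux4_AB3 (hpq : p ≠ q) (hpk : p ≠ k) (hqk : q ≠ k)
    (hmp : m ≠ p) (hmq : m ≠ q) (hmk : m ≠ k)
    (HQ : Qc f p q k) (HB : Qc f p k q) (HC : Qc f q k p)
    (HKMq : Qc f k m q) :
    ∀ y, y p = y q → y q = y k → f (fl p (fl q (fl k y))) = f y := by
  intro y hab hbc
  have h := aux4_AB2 hpq.symm hqk hpk hmq hmp hmk (Qc_symm HQ) HC HB HKMq y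
    hab.symm (hab.trans hbc)
  rw [fl_comm (show q ≠ p from hpq.symm)] at h
  exact h

/-- Case 22, subcase `Q k m r` (r new): `r` is inessential. -/
lemma aux4_r {r : Fin n} (hpq : p ≠ q) (hpk : p ≠ k) (hqk : q ≠ k)
    (hmp : m ≠ p) (hmq : m ≠ q) (hmk : m ≠ k)
    (hrp : r ≠ p) (hrq : r ≠ q) (hrk : r ≠ k)
    (HQ : Qc f p q k) (HB : Qc f p k q) (HC : Qc f q k p)
    (HKMr : Qc f k m r) :
    ∀ x, f (fl r x) = f x := by
  have core : ∀ y, y p = y q → f (fl r y) = f y := coreQ hrp hrq hrk hmk HQ HKMr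
  intro x
  by_cases hab : x p = x q
  · exact core x hab
  by_cases hbc : x q = x k
  · refine conj (show p ≠ r from hrp.symm) (HC x hbc) ?_ ?_
    · refine HC (fl r x) ?_
      rw [fl_ne hrq.symm, fl_ne hrk.symm]; exact hbc
    · refine core (fl p x) ?_
      rw [fl_same, fl_ne hpq.symm]
      exact (ne_flip' (fun h => hab h.symm)).symm
  · have hac : x p = x k := by
      have e2 : x k = x q + 1 := ne_flip' (fun h => hbc h.symm)
      rw [ne_flip' hab, e2]
    refine conj (show q ≠ r from hrq.symm) (HB x hac) ?_ ?_
    · refine HB (fl r x) ?_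
      rw [fl_ne hrp.symm, fl_ne hrk.symm]; exact hac
    · refine core (fl q x) ?_
      rw [fl_ne hpq, fl_same]; exact ne_flip' hab

end Aux4

end Stmt7Aux
namespace Stmt7Aux

variable {n : ℕ} {f : (Fin n → ZMod 2) → ZMod 2}

lemma exists_new (hn : 4 ≤ n) (a b c : Fin n) : ∃ m, m ≠ a ∧ m ≠ b ∧ m ≠ c := by
  by_contra h
  push_neg at h
  have hsub : (Finset.univ : Finset (Fin n)) ⊆ {a, b, c} := by
    intro m _
    simp only [Finset.mem_insert, Finset.mem_singleton]
    rcases eq_or_ne m a with h1 | h1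
    · exact Or.inl h1
    rcases eq_or_ne m b with h2 | h2
    · exact Or.inr (Or.inl h2)
    exact Or.inr (Or.inr (h m h1 h2))
  have hc := Finset.card_le_card hsub
  rw [Finset.card_univ, Fintype.card_fin] at hc
  have h3 : ({a, b, c} : Finset (Fin n)).card ≤ 3 := by
    refine le_trans (Finset.card_insert_le _ _) ?_
    have h4 := Finset.card_insert_le b ({c} : Finset (Fin n))
    simp only [Finset.card_singleton] at h4
    omega
  omega

/-- The master lemma: no `Q` condition can hold. -/
theorem noQ (hn5 : 5 ≤ n)
    (hallE : ∀ i : Fin n, ∃ x, f (fl i x) ≠ f x)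
    (PC : ∀ i j : Fin n, i ≠ j → Pc f i j ∨ ∃ r, r ≠ i ∧ r ≠ j ∧ Qc f i j r) :
    ∀ p q k : Fin n, p ≠ q → p ≠ k → q ≠ k → Qc f p q k → False := by
  intro p q k hpq hpk hqk HQ
  have kill : ∀ w : Fin n, (∀ x, f (fl w x) = f x) → False := by
    intro w hw
    obtain ⟨x, hx⟩ := hallE w
    exact hx (hw x)
  rcases PC p k hpk with HPpk | ⟨m1, h1p, h1k, H1⟩
  · rcases PC q k hqk with HPqk | ⟨m2, h2q, h2k, H2⟩
    · -- case 11
      obtain ⟨m, hmp, hmq, hmk⟩ := exists_new (by omega) p q k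
      rcases PC k m hmk.symm with HPkm | ⟨r, hrk, hrm, HKMr⟩
      · exact kill k (aux1_k hpq hpk hqk HQ HPpk HPqk
          (aux1_AB1 hpq hpk hqk hmp hmq hmk HQ HPpk HPqk HPkm))
      · rcases eq_or_ne r p with heqr | hrp
        · rw [heqr] at HKMr
          exact kill k (aux1_k hpq hpk hqk HQ HPpk HPqk
            (aux1_AB2 hpq hpk hqk hmp hmq hmk HQ HPpk HPqk HKMr))
        · rcases eq_or_ne r q with heqr | hrq
          · rw [heqr] at HKMr
            exact kill k (aux1_k hpq hpk hqk HQ HPpk HPqk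
              (aux1_AB3 hpq hpk hqk hmp hmq hmk HQ HPpk HPqk HKMr))
          · exact kill r (aux1_r hpq hpk hqk hmp hmq hmk hrp hrq hrk HQ HPpk HPqk HKMr)
    · rcases eq_or_ne m2 p with heq2 | h2p
      · rw [heq2] at H2
        exact kill p (aux2 hpq hpk hqk HQ HPpk H2)
      · exact kill m2 (aux3 hpq hpk hqk h2p h2q h2k HQ HPpk H2)
  · rcases PC q k hqk with HPqk | ⟨m2, h2q, h2k, H2⟩
    · rcases eq_or_ne m1 q with heq1 | h1q
      · rw [heq1] at H1
        exact kill q (aux2 hpq.symm hqk hpk (Qc_symm HQ) HPqk H1)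
      · exact kill m1 (aux3 hpq.symm hqk hpk h1q h1p h1k (Qc_symm HQ) HPqk H1)
    · rcases eq_or_ne m1 q with heq1 | h1q
      · rw [heq1] at H1
        rcases eq_or_ne m2 p with heq2 | h2p
        · rw [heq2] at H2
          -- case 22
          obtain ⟨m, hmp, hmq, hmk⟩ := exists_new (by omega) p q k
          rcases PC k m hmk.symm with HPkm | ⟨r, hrk, hrm, HKMr⟩
          · exact kill k (aux4_k hpq hpk hqk HQ H1 H2
              (aux4_AB1 hpq hpk hqk hmp hmq hmk HQ H1 H2 HPkm))
          · rcases eq_or_ne r p with heqr | hrp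
            · rw [heqr] at HKMr
              exact kill k (aux4_k hpq hpk hqk HQ H1 H2
                (aux4_AB2 hpq hpk hqk hmp hmq hmk HQ H1 H2 HKMr))
            · rcases eq_or_ne r q with heqr | hrq
              · rw [heqr] at HKMr
                exact kill k (aux4_k hpq hpk hqk HQ H1 H2
                  (aux4_AB3 hpq hpk hqk hmp hmq hmk HQ H1 H2 HKMr))
              · exact kill r (aux4_r hpq hpk hqk hmp hmq hmk hrp hrq hrk HQ H1 H2 HKMr)
        · exact kill m2 (aux5 hpq hpk hqk h2p h2q h2k HQ H1 H2)
      · rcases eq_or_ne m2 p with heq2 | h2p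
        · rw [heq2] at H2
          exact kill m1 (aux5 hpq.symm hqk hpk h1q h1p h1k (Qc_symm HQ) H2 H1)
        · rcases eq_or_ne m1 m2 with heq12 | h12
          · rw [heq12] at H1
            exact kill m2 (aux6eq hpq hpk hqk h2p h2q h2k HQ H1 H2)
          · rcases PC k m1 h1k.symm with HPk1 | ⟨r, hrk, hr1, HK1r⟩
            · exact kill m2 (aux6skel hpq hpk hqk h1p h1q h1k h2p h2q h2k h12 HQ H1 H2
                (aux6key_i hpq hpk hqk h1p h1q h1k h2p h2q h2k h12 H2 HPk1))
            · rcases eq_or_ne r p with heqr | hrp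
              · rw [heqr] at HK1r
                exact kill m2 (aux6skel hpq hpk hqk h1p h1q h1k h2p h2q h2k h12 HQ H1 H2
                  (aux6key_ii hpq hpk hqk h1p h1q h1k h2p h2q h2k h12 HQ H2 HK1r))
              · rcases eq_or_ne r q with heqr | hrq
                · rw [heqr] at HK1r
                  exact kill m2 (aux6skel hpq hpk hqk h1p h1q h1k h2p h2q h2k h12 HQ H1 H2
                    (aux6key_iii hpq hpk hqk h1p h1q h1k h2p h2q h2k h12 H2 HK1r))
                · rcases eq_or_ne r m2 with heqr | hr2
                  · rw [heqr] at HK1r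
                    exact kill m2 (aux6skel hpq hpk hqk h1p h1q h1k h2p h2q h2k h12 HQ H1 H2
                      (aux6key_iv h12 HK1r))
                  · rcases PC m1 m2 h12 with HP12 | ⟨r2, hr21, hr22, H12r⟩
                    · exact kill m1 (aux6va hpq hpk hqk h1p h1q h1k h2p h2q h2k h12
                        HQ H1 H2 HP12)
                    · rcases eq_or_ne r2 p with heqr2 | hr2p
                      · rw [heqr2] at H12r
                        exact kill k (aux6vb hpq hpk hqk h1p h1q h1k h2p h2q h2k h12
                          HQ H1 H2 H12r)
                      · rcases eq_or_ne r2 q with heqr2 | hr2q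
                        · rw [heqr2] at H12r
                          exact kill k (aux6vb hpq.symm hqk hpk h2q h2p h2k h1q h1p h1k
                            h12.symm (Qc_symm HQ) H2 H1 (Qc_symm H12r))
                        · rcases eq_or_ne r2 k with heqr2 | hr2k
                          · rw [heqr2] at H12r
                            exact kill r (aux6vd hpq hpk hqk h1p h1q h1k h2p h2q h2k h12
                              hrp hrq hrk hr1 hr2 HQ H1 H2 HK1r H12r)
                          · exact kill r2 (aux6ve hpq hpk hqk h1p h1q h1k h2p h2q h2k h12
                              hr2p hr2q hr2k hr21 hr22 HQ H1 H2 H12r)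

/-- Every pair satisfies the `P` condition. -/
theorem allP (hn5 : 5 ≤ n)
    (hallE : ∀ i : Fin n, ∃ x, f (fl i x) ≠ f x)
    (PC : ∀ i j : Fin n, i ≠ j → Pc f i j ∨ ∃ r, r ≠ i ∧ r ≠ j ∧ Qc f i j r) :
    ∀ i j : Fin n, i ≠ j → Pc f i j := by
  intro i j hij
  rcases PC i j hij with HP | ⟨r, hri, hrj, HQr⟩
  · exact HP
  · exact (noQ hn5 hallE PC i j r hij hri.symm hrj.symm HQr).elim

end Stmt7Aux
namespace Stmt7Aux

variable {n : ℕ} {f : (Fin n → ZMod 2) → ZMod 2}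

lemma z2_sum_ne {a b : ZMod 2} (h : ¬ a = b) : a + b = 1 := by
  revert h; revert a b; decide

lemma ne_flip {a b : ZMod 2} (h : ¬ a = b) : a + 1 = b := by
  revert h; revert a b; decide

lemma z2_succ_ne (a : ZMod 2) : ¬ a + 1 = a := by revert a; decide

lemma fl_sum (i : Fin n) (x : Fin n → ZMod 2) :
    ∑ j, fl i x j = (∑ j, x j) + 1 := by
  unfold fl
  rw [Finset.sum_update_of_mem (Finset.mem_univ i), Finset.sdiff_singleton_eq_erase,
    ← Finset.add_sum_erase Finset.univ x (Finset.mem_univ i)]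
  ring

lemma constant_on_parity (hn : 5 ≤ n)
    (Pall : ∀ i j : Fin n, i ≠ j → Pc f i j) :
    ∀ x y : Fin n → ZMod 2, (∑ i, x i) = (∑ i, y i) → f x = f y := by
  suffices H : ∀ d (x y : Fin n → ZMod 2),
      (Finset.univ.filter (fun i => x i ≠ y i)).card = d →
      (∑ i, x i) = (∑ i, y i) → f x = f y by
    intro x y h
    exact H _ x y rfl h
  intro d
  induction d using Nat.strong_induction_on with
  | _ d IH =>
  intro x y hcard hsum
  rcases Nat.eq_zero_or_pos d with hd0 | hdpos
  · have hxy : ∀ i, x i = y i := by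
      intro i
      by_contra hi
      have hmem : i ∈ Finset.univ.filter (fun i => x i ≠ y i) := by
        simp only [Finset.mem_filter, Finset.mem_univ, true_and]; exact hi
      rw [hd0, Finset.card_eq_zero] at hcard
      rw [hcard] at hmem
      exact absurd hmem (Finset.notMem_empty i)
    exact congrArg f (funext hxy)
  · have hpar : ((Finset.univ.filter (fun i => x i ≠ y i)).card : ZMod 2) = 0 := by
      have h1 : ∑ i, (x i + y i) = 0 := by
        rw [Finset.sum_add_distrib, hsum, CharTwo.add_self_eq_zero]
      have h2 : ∑ i ∈ Finset.univ.filter (fun i => x i ≠ y i), (1 : ZMod 2)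
          = ∑ i, (x i + y i) := by
        rw [Finset.sum_filter]
        refine Finset.sum_congr rfl ?_
        intro i _
        by_cases h : x i = y i
        · rw [if_neg (not_not.mpr h), h]
          exact (CharTwo.add_self_eq_zero _).symm
        · rw [if_pos h]
          exact (z2_sum_ne h).symm
      rw [Finset.sum_const, nsmul_eq_mul, mul_one] at h2
      rw [h2, h1]
    have hd2 : 2 ≤ d := by
      rw [hcard, ZMod.natCast_eq_zero_iff] at hpar
      omega
    obtain ⟨i, hi⟩ := Finset.card_pos.mp
      (show 0 < (Finset.univ.filter (fun i => x i ≠ y i)).card by omega)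
    obtain ⟨j, hj⟩ := Finset.card_pos.mp
      (show 0 < ((Finset.univ.filter (fun i => x i ≠ y i)).erase i).card by
        rw [Finset.card_erase_of_mem hi, hcard]; omega)
    have hji : j ≠ i := Finset.ne_of_mem_erase hj
    have hjmem : j ∈ Finset.univ.filter (fun i => x i ≠ y i) := Finset.mem_of_mem_erase hj
    have hxi : ¬ x i = y i := by
      have h := hi
      simp only [Finset.mem_filter, Finset.mem_univ, true_and] at h
      exact h
    have hxj : ¬ x j = y j := by
      have h := hjmem
      simp only [Finset.mem_filter, Finset.mem_univ, true_and] at h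
      exact h
    have hfx : f (fl i (fl j x)) = f x := by
      by_cases hxy : x i = x j
      · exact Pall i j hji.symm x hxy
      · obtain ⟨k, hki, hkj, _⟩ := exists_new (by omega) i j i
        by_cases hk : x k = x j
        · have e1 : f (fl j (fl k x)) = f x := Pall j k hkj.symm x hk.symm
          have e2 : f (fl i (fl k (fl j (fl k x)))) = f (fl j (fl k x)) := by
            refine Pall i k hki.symm (fl j (fl k x)) ?_
            rw [fl_ne hji.symm, fl_ne hki.symm, fl_ne hkj, fl_same]
            exact ne_flip' (fun h => hxy (h.trans hk))
          rw [fl_comm hkj, fl_fl] at e2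
          rw [e2]; exact e1
        · have hk2 : x k = x i := by
            rw [ne_flip' hk, ne_flip' hxy]
          have e1 : f (fl i (fl k x)) = f x := Pall i k hki.symm x hk2.symm
          have e2 : f (fl j (fl k (fl i (fl k x)))) = f (fl i (fl k x)) := by
            refine Pall j k hkj.symm (fl i (fl k x)) ?_
            rw [fl_ne hji, fl_ne hkj.symm, fl_ne hki, fl_same]
            exact ne_flip' (fun h => hk h.symm)
          rw [fl_comm hki, fl_fl] at e2
          rw [fl_comm hji.symm, e2]
          exact e1
    have hsum' : (∑ t, fl i (fl j x) t) = ∑ t, y t := by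
      rw [fl_sum, fl_sum, z2_aa]; exact hsum
    have hset : Finset.univ.filter (fun t => fl i (fl j x) t ≠ y t)
        = ((Finset.univ.filter (fun t => x t ≠ y t)).erase i).erase j := by
      ext t
      simp only [Finset.mem_filter, Finset.mem_univ, true_and, Finset.mem_erase]
      rcases eq_or_ne t j with rfl | htj
      · rw [show fl i (fl t x) t = x t + 1 by rw [fl_ne hji, fl_same]]
        simp [ne_flip hxj]
      · rcases eq_or_ne t i with rfl | hti
        · rw [show fl t (fl j x) t = x t + 1 by rw [fl_same, fl_ne htj]]
          simp [ne_flip hxi]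
        · rw [show fl i (fl j x) t = x t by rw [fl_ne hti, fl_ne htj]]
          simp [hti, htj]
    have hcard' : (Finset.univ.filter (fun t => fl i (fl j x) t ≠ y t)).card = d - 2 := by
      rw [hset, Finset.card_erase_of_mem hj, Finset.card_erase_of_mem hi, hcard]
      omega
    exact hfx.symm.trans (IH (d - 2) (by omega) (fl i (fl j x)) y hcard' hsum')

lemma parity_formula (hn5 : 5 ≤ n)
    (hallE : ∀ i : Fin n, ∃ x, f (fl i x) ≠ f x)
    (Pall : ∀ i j : Fin n, i ≠ j → Pc f i j) :
    ∀ x, f x = f (fun _ => 0) + ∑ i, x i := by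
  have key := constant_on_parity hn5 Pall
  have hz : (∑ _i : Fin n, (0 : ZMod 2)) = 0 := Finset.sum_const_zero
  obtain ⟨i0⟩ : Nonempty (Fin n) := ⟨⟨0, by omega⟩⟩
  have hodd : f (fl i0 (fun _ => 0)) = f (fun _ => 0) + 1 := by
    have hne : ¬ f (fl i0 (fun _ => 0)) = f (fun _ => 0) := by
      intro hEq
      obtain ⟨y, hy⟩ := hallE i0
      apply hy
      rcases z2_cases (∑ i, y i) 0 with hs | hs
      · have e1 : f y = f (fun _ => 0) := key y _ (by rw [hs, hz])
        have e2 : f (fl i0 y) = f (fl i0 (fun _ => 0)) :=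
          key _ _ (by rw [fl_sum, fl_sum, hs, hz])
        rw [e2, hEq]
        exact e1.symm
      · have e1 : f y = f (fl i0 (fun _ => 0)) :=
          key _ _ (by rw [hs, fl_sum, hz])
        have e2 : f (fl i0 y) = f (fun _ => 0) :=
          key _ _ (by rw [fl_sum, hs, z2_aa, hz])
        rw [e2, e1]
        exact hEq.symm
    exact ne_flip' hne
  intro x
  rcases z2_cases (∑ i, x i) 0 with hs | hs
  · rw [hs, add_zero]
    exact key x _ (by rw [hs, hz])
  · have e := key x (fl i0 (fun _ => 0)) (by rw [hs, fl_sum, hz])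
    rw [e, hodd, hs, zero_add]

end Stmt7Aux
open Stmt7Aux in
/-- A Boolean function of `n ≥ 5` essential variables with arity gap `2` is one of the two
parity functions, and all non-empty sets of its variables are separable. -/
theorem stmt_7 {n : ℕ} (hn2 : 2 ≤ n) (hn5 : 5 ≤ n) (f : (Fin n → ZMod 2) → ZMod 2)
    (hess : ess f = n) (hgap : gap f = 2) :
    ((∀ x, f x = ∑ i, x i) ∨ (∀ x, f x = 1 + ∑ i, x i)) ∧
    (∀ M : Set (Fin n), M.Nonempty → Separable f M) := by
  have hall : ∀ i, Essential f i := all_essential hess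
  have hallE : ∀ i, ∃ x, f (fl i x) ≠ f x := fun i => essential_iff_fl.mp (hall i)
  have hbound := bound_from_gap hess hgap
  have PC : ∀ i j : Fin n, i ≠ j → Pc f i j ∨ ∃ r, r ≠ i ∧ r ≠ j ∧ Qc f i j r :=
    fun i j hij => pair_cond hall hbound hij
  have Pall := allP hn5 hallE PC
  have formula := parity_formula hn5 hallE Pall
  constructor
  · rcases z2_cases (f (fun _ => 0)) 0 with h0 | h0
    · left; intro x; rw [formula x, h0, zero_add]
    · right; intro x; rw [formula x, h0, zero_add]
  · intro M hM
    refine ⟨hM, Finset.univ.filter (fun j => j ∉ M), (fun _ => 0), ?_⟩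
    ext i
    simp only [Set.mem_setOf_eq]
    constructor
    · intro hEss
      by_contra hiM
      have hin : i ∈ Finset.univ.filter (fun j => j ∉ M) :=
        Finset.mem_filter.mpr ⟨Finset.mem_univ i, hiM⟩
      refine absurd hEss (not_essential_iff.mpr ?_)
      intro a
      show f _ = f _
      congr 1
      funext t
      by_cases ht : t ∈ Finset.univ.filter (fun j => j ∉ M)
      · rw [if_pos ht, if_pos ht]
      · have hti : t ≠ i := by rintro rfl; exact ht hin
        rw [if_neg ht, if_neg ht, fl_ne hti]
    · intro hiM
      have hnotin : i ∉ Finset.univ.filter (fun j => j ∉ M) := by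
        intro hmem
        exact (Finset.mem_filter.mp hmem).2 hiM
      rw [essential_iff_fl]
      refine ⟨(fun _ => 0), ?_⟩
      have h1 : restrictF f (Finset.univ.filter (fun j => j ∉ M)) (fun _ => 0)
          (fl i (fun _ => 0)) = f (fl i (fun _ => 0)) := by
        show f _ = f _
        congr 1
        funext t
        by_cases ht : t ∈ Finset.univ.filter (fun j => j ∉ M)
        · have hti : t ≠ i := fun h => hnotin (h ▸ ht)
          rw [if_pos ht, fl_ne hti]
        · rw [if_neg ht]
      have h0 : restrictF f (Finset.univ.filter (fun j => j ∉ M)) (fun _ => 0)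
          (fun _ => 0) = f (fun _ => 0) := by
        show f _ = f _
        congr 1
        funext t
        by_cases ht : t ∈ Finset.univ.filter (fun j => j ∉ M)
        · rw [if_pos ht]
        · rw [if_neg ht]
      rw [h1, h0, formula (fl i (fun _ => 0)), fl_sum, Finset.sum_const_zero, zero_add]
      exact z2_succ_ne _
end

section
/- For a function f : Z_k^n → Z_k with 2 ≤ ess(f) = n ≤ k, the cmr-complexity satisfies n(n−1)/2 ≤ cmr(f) ≤ n!·(n−1)!/2^{n−2}. -/
open scoped Classical

/-- Auxiliary fuelled version of the `cmr`-complexity; the fuel `ess f` suffices since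
each identification strictly decreases the number of essential variables. -/
noncomputable def cmrAux {n k : ℕ} : ℕ → ((Fin n → ZMod k) → ZMod k) → ℕ
  | 0, _ => 1
  | m + 1, f =>
    if ess f ≤ 1 then 1
    else if ess f = 2 then 2
    else ∑ p ∈ Finset.univ.filter
        (fun p : Fin n × Fin n => p.2 < p.1 ∧ Essential f p.1 ∧ Essential f p.2),
      cmrAux m (ident f p.1 p.2)

/-- The `cmr`-complexity of `f`. -/
noncomputable def cmr {n k : ℕ} (f : (Fin n → ZMod k) → ZMod k) : ℕ :=
  cmrAux (ess f) f

/-- Auxiliary fuelled version of `cmr`-equivalence. -/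
noncomputable def cmrEquivAux {n k : ℕ} :
    ℕ → ((Fin n → ZMod k) → ZMod k) → ((Fin n → ZMod k) → ZMod k) → Prop
  | 0, f, g => ess f = ess g
  | m + 1, f, g => ess f = ess g ∧ (2 ≤ ess f →
      ∃ σ : Equiv.Perm (Fin n), ∀ i j : Fin n, j < i → Essential f i → Essential f j →
        cmrEquivAux m (ident f i j) (ident g (σ i) (σ j)))

/-- `cmr`-equivalence of functions. -/
noncomputable def cmrEquiv {n k : ℕ} (f g : (Fin n → ZMod k) → ZMod k) : Prop :=
  cmrEquivAux (ess f) f g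

/-!
Identifying `x_i` with `x_j` makes `x_i` inessential and creates no new essential variable, so
every simple identification minor of a function with `s` essential variables has at most `s - 1`
of them. The recursion for `cmr` sums over the `C(s, 2)` pairs of essential variables; bounding
every summand below by `1` gives `C(s, 2) ≤ cmr f`, and bounding it above inductively gives
`cmr f ≤ 2 ∏_{t=3}^{s} C(t, 2) = s! (s-1)! / 2^(s-2)`.
-/

open Finset
open scoped Nat

section Essential

variable {n k : ℕ} {f : (Fin n → ZMod k) → ZMod k}

variable (f) in
lemma ess_eq_card : ess f = #{i | Essential f i} := by
  rw [ess, Nat.card_eq_fintype_card, Fintype.card_subtype]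

lemma not_essential_ident_self {i j : Fin n} (hij : i ≠ j) : ¬ Essential (ident f i j) i := by
  rintro ⟨a, b, hab, hne⟩
  refine hne (congrArg f (funext fun l => ?_))
  rcases eq_or_ne l i with rfl | hl
  · simp [hab j hij.symm]
  · simp [Function.update_of_ne hl, hab l hl]

lemma Essential.of_ident {i j l : Fin n} (hli : l ≠ i) (hlj : l ≠ j)
    (h : Essential (ident f i j) l) : Essential f l := by
  obtain ⟨a, b, hab, hne⟩ := h
  refine ⟨Function.update a i (a j), Function.update b i (b j), fun m hm => ?_, hne⟩
  rcases eq_or_ne m i with rfl | hmi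
  · simp [hab j hlj.symm]
  · simp [Function.update_of_ne hmi, hab m hm]

lemma ess_ident_lt {i j : Fin n} (hi : Essential f i) (hj : Essential f j) (hij : i ≠ j) :
    ess (ident f i j) < ess f := by
  rw [ess_eq_card, ess_eq_card]
  refine card_lt_card (ssubset_iff_of_subset (fun l hl => ?_) |>.mpr ⟨i, by simpa, ?_⟩)
  · simp only [mem_filter, mem_univ, true_and] at hl ⊢
    have hli : l ≠ i := by rintro rfl; exact not_essential_ident_self hij hl
    rcases eq_or_ne l j with rfl | hlj
    · exact hj
    · exact hl.of_ident hli hlj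
  · simpa using not_essential_ident_self hij

end Essential

section Complexity

variable {n k : ℕ}

noncomputable def essPairs (f : (Fin n → ZMod k) → ZMod k) : Finset (Fin n × Fin n) :=
  {p | p.2 < p.1 ∧ Essential f p.1 ∧ Essential f p.2}

lemma card_essPairs (f : (Fin n → ZMod k) → ZMod k) : #(essPairs f) = (ess f).choose 2 := by
  rw [ess_eq_card, ← card_product_filter_lt]
  exact card_equiv (Equiv.prodComm _ _) (by simp [essPairs, and_comm])

lemma cmrAux_succ_of_three_le (m : ℕ) {f : (Fin n → ZMod k) → ZMod k} (hf : 3 ≤ ess f) :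
    cmrAux (m + 1) f = ∑ p ∈ essPairs f, cmrAux m (ident f p.1 p.2) := by
  rw [cmrAux, if_neg (by omega), if_neg (by omega), essPairs]

lemma card_essPairs_le_sum {f : (Fin n → ZMod k) → ZMod k} {c : Fin n × Fin n → ℕ}
    (hc : ∀ p ∈ essPairs f, 1 ≤ c p) : #(essPairs f) ≤ ∑ p ∈ essPairs f, c p :=
  card_eq_sum_ones (essPairs f) ▸ sum_le_sum hc

lemma one_le_cmrAux (m : ℕ) (f : (Fin n → ZMod k) → ZMod k) : 1 ≤ cmrAux m f := by
  induction m generalizing f with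
  | zero => exact le_rfl
  | succ m ih =>
    rcases le_or_gt (ess f) 2 with hf | hf
    · rw [cmrAux]
      split_ifs <;> omega
    · rw [cmrAux_succ_of_three_le m hf]
      calc 1 ≤ #(essPairs f) := card_essPairs f ▸ Nat.choose_pos (by omega)
        _ ≤ _ := card_essPairs_le_sum fun p _ => ih _

theorem choose_ess_two_le_cmr (f : (Fin n → ZMod k) → ZMod k) : (ess f).choose 2 ≤ cmr f := by
  rcases lt_trichotomy (ess f) 2 with hf | hf | hf
  · simp [Nat.choose_eq_zero_of_lt hf]
  · rw [hf]
    exact one_le_cmrAux _ f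
  · obtain ⟨m, hm⟩ : ∃ m, ess f = m + 1 := ⟨ess f - 1, by omega⟩
    rw [cmr, hm, cmrAux_succ_of_three_le m (by omega), ← hm, ← card_essPairs]
    exact card_essPairs_le_sum fun p _ => one_le_cmrAux _ _

def cmrBound : ℕ → ℕ
  | 0 => 1
  | 1 => 1
  | 2 => 2
  | s + 3 => (s + 3).choose 2 * cmrBound (s + 2)

lemma cmrBound_mono : Monotone cmrBound := by
  refine monotone_nat_of_le_succ fun s => ?_
  match s with
  | 0 | 1 => decide
  | s + 2 => exact Nat.le_mul_of_pos_left _ (Nat.choose_pos (by omega))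

lemma two_pow_mul_cmrBound (s : ℕ) : 2 ^ s * cmrBound (s + 2) = (s + 2)! * (s + 1)! := by
  induction s with
  | zero => rfl
  | succ s ih =>
    have hchoose : (s + 3).choose 2 * 2 * (s + 1)! = (s + 3)! :=
      Nat.choose_mul_factorial_mul_factorial (n := s + 3) (k := 2) (by omega)
    calc 2 ^ (s + 1) * cmrBound (s + 3)
        = (s + 3).choose 2 * 2 * (2 ^ s * cmrBound (s + 2)) := by rw [cmrBound]; ring
      _ = (s + 3)! * (s + 2)! := by rw [ih, ← hchoose, Nat.factorial_succ (s + 1)]; ring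

lemma cmrBound_eq (s : ℕ) : cmrBound s = s ! * (s - 1)! / 2 ^ (s - 2) := by
  match s with
  | 0 | 1 => rfl
  | s + 2 =>
    rw [show s + 2 - 1 = s + 1 by omega, show s + 2 - 2 = s by omega, ← two_pow_mul_cmrBound,
      Nat.mul_div_cancel_left _ (by positivity)]

lemma cmrAux_le_cmrBound {m : ℕ} {f : (Fin n → ZMod k) → ZMod k} (hm : ess f ≤ m) :
    cmrAux m f ≤ cmrBound (ess f) := by
  induction m generalizing f with
  | zero => simp [cmrAux, Nat.le_zero.mp hm, cmrBound]
  | succ m ih =>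
    rcases le_or_gt (ess f) 2 with hf | hf
    · rw [cmrAux]
      interval_cases h : ess f <;> simp [cmrBound]
    · obtain ⟨s, hs⟩ : ∃ s, ess f = s + 3 := ⟨ess f - 3, by omega⟩
      have hminor : ∀ p ∈ essPairs f, cmrAux m (ident f p.1 p.2) ≤ cmrBound (s + 2) := by
        intro p hp
        obtain ⟨hlt, h1, h2⟩ := (mem_filter.mp hp).2
        have hless := ess_ident_lt h1 h2 hlt.ne'
        exact (ih (by omega)).trans (cmrBound_mono (by omega))
      calc cmrAux (m + 1) f
          = ∑ p ∈ essPairs f, cmrAux m (ident f p.1 p.2) := cmrAux_succ_of_three_le m (by omega)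
        _ ≤ #(essPairs f) * cmrBound (s + 2) := by simpa using sum_le_card_nsmul _ _ _ hminor
        _ = cmrBound (ess f) := by rw [card_essPairs, hs, cmrBound]

theorem cmr_le_cmrBound (f : (Fin n → ZMod k) → ZMod k) : cmr f ≤ cmrBound (ess f) :=
  cmrAux_le_cmrBound le_rfl

end Complexity

theorem stmt_8_general {n k : ℕ} (f : (Fin n → ZMod k) → ZMod k) (hess : ess f = n) :
    n * (n - 1) / 2 ≤ cmr f ∧
    cmr f ≤ n.factorial * (n - 1).factorial / 2 ^ (n - 2) := by
  have hlower := choose_ess_two_le_cmr f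
  have hupper := cmr_le_cmrBound f
  rw [hess, Nat.choose_two_right] at hlower
  rw [hess, cmrBound_eq] at hupper
  exact ⟨hlower, hupper⟩

/-- Bounds for the cmr-complexity: `n(n−1)/2 ≤ cmr f ≤ n!(n−1)!/2^(n−2)`. -/
theorem stmt_8 {n k : ℕ} (hk : 2 ≤ k) (hn : 2 ≤ n) (hnk : n ≤ k)
    (f : (Fin n → ZMod k) → ZMod k) (hess : ess f = n) :
    n * (n - 1) / 2 ≤ cmr f ∧
    cmr f ≤ n.factorial * (n - 1).factorial / 2 ^ (n - 2) :=
  stmt_8_general f hess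
end

section
/- If σ : Z_k → Z_k is not a permutation (not injective), then the output-transformation ψ_σ, defined by ψ_σ(f)(a) = σ(f(a)), does not preserve cmr-equivalence: there exists a function f : Z_k^n → Z_k (n ≥ 2) with all n variables essential such that ψ_σ(f) is constant, hence f is not cmr-equivalent to ψ_σ(f). -/
open scoped Classical

/-- A non-injective output transformation does not preserve cmr-equivalence: there is a
function with all variables essential whose image is constant. -/
theorem stmt_12 {n k : ℕ} (hn : 2 ≤ n) (σ : ZMod k → ZMod k)
    (hσ : ¬ Function.Injective σ) :
    ∃ f : (Fin n → ZMod k) → ZMod k, (∀ i, Essential f i) ∧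
      (∃ c : ZMod k, ∀ x, σ (f x) = c) ∧ ¬ cmrEquiv f (fun x => σ (f x)) := by
  rw [Function.not_injective_iff] at hσ
  obtain ⟨a₁, a₂, hσeq, hne⟩ := hσ
  set b : Fin n → ZMod k := fun _ => a₁ with hb
  set f : (Fin n → ZMod k) → ZMod k := fun x => if x = b then a₁ else a₂ with hf
  have hfb : f b = a₁ := by simp [hf]
  have hfx : ∀ x, x ≠ b → f x = a₂ := by intro x hx; simp [hf, hx]
  have hess : ∀ i, Essential f i := by
    intro i
    refine ⟨b, Function.update b i a₂, ?_, ?_⟩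
    · intro j hj; simp [Function.update_of_ne hj]
    · have hub : Function.update b i a₂ ≠ b := by
        intro h
        have := congrFun h i
        simp [hb] at this
        exact hne this.symm
      rw [hfb, hfx _ hub]
      exact hne
  have hconst : ∀ x, σ (f x) = σ a₁ := by
    intro x
    by_cases hx : x = b
    · rw [hx, hfb]
    · rw [hfx x hx, ← hσeq]
  refine ⟨f, hess, ⟨σ a₁, hconst⟩, ?_⟩
  have hessf : ess f = n := by
    rw [ess]
    have : (∀ i : Fin n, Essential f i) := hess
    rw [Nat.card_eq_fintype_card, Fintype.card_of_subtype Finset.univ (by simp [hess]),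
      Finset.card_univ, Fintype.card_fin]
  have hessg : ess (fun x => σ (f x)) = 0 := by
    rw [ess, Nat.card_eq_zero]
    left
    rw [isEmpty_subtype]
    intro i ⟨a, b', _, hab⟩
    exact hab ((hconst a).trans (hconst b').symm)
  intro hcontra
  rw [cmrEquiv, hessf] at hcontra
  obtain ⟨m, rfl⟩ : ∃ m, n = m + 1 := ⟨n - 1, by omega⟩
  have := hcontra.1
  rw [hessf, hessg] at this
  omega
end

section
/- If ess(f) = n ≤ k and f : Z_k^n → Z_k has essential arity gap equal to n (the maximal possible), then the number of distinct order-1 identification minors of f is exactly n(n−1)/2 up to the recursive count, and cmr(f) = n(n−1)/2; in particular f attains the lower bound in the inequality n(n−1)/2 ≤ cmr(f). -/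
open scoped Classical

lemma ess_le' {n k : ℕ} (f : (Fin n → ZMod k) → ZMod k) : ess f ≤ n := by
  have := Fintype.card_subtype_le (Essential f)
  simpa [ess, Nat.card_eq_fintype_card] using this

lemma all_essential' {n k : ℕ} (f : (Fin n → ZMod k) → ZMod k) (h : ess f = n) :
    ∀ i, Essential f i := by
  have hcard : (Finset.univ.filter (Essential f)).card = n := by
    have : Fintype.card {i : Fin n // Essential f i} = n := by
      rw [← Nat.card_eq_fintype_card]; exact h
    simpa [Fintype.card_subtype] using this
  have huniv : Finset.univ.filter (Essential f) = Finset.univ :=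
    Finset.eq_univ_of_card _ (by simp [hcard])
  intro i
  exact (Finset.mem_filter.mp (Finset.eq_univ_iff_forall.mp huniv i)).2


/-- A function with maximal arity gap `gap f = n` attains the lower bound
`cmr f = n(n−1)/2`, the number of essential pairs. -/
theorem stmt_15 {n k : ℕ} (hk : 2 ≤ k) (hn : 3 ≤ n) (hnk : n ≤ k)
    (f : (Fin n → ZMod k) → ZMod k) (hess : ess f = n) (hgap : gap f = n) :
    (Finset.univ.filter
      (fun p : Fin n × Fin n => p.2 < p.1 ∧ Essential f p.1 ∧ Essential f p.2)).card =
        n * (n - 1) / 2 ∧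
    cmr f = n * (n - 1) / 2 := by
  have hall := all_essential' f hess
  have hfe : Finset.univ.filter
      (fun p : Fin n × Fin n => p.2 < p.1 ∧ Essential f p.1 ∧ Essential f p.2)
      = Finset.univ.filter (fun p : Fin n × Fin n => p.2 < p.1) := by
    apply Finset.filter_congr
    intro p _
    simp [hall]
  have hcard : (Finset.univ.filter
      (fun p : Fin n × Fin n => p.2 < p.1 ∧ Essential f p.1 ∧ Essential f p.2)).card
      = n * (n - 1) / 2 := by
    rw [hfe, Finset.card_filter, Fintype.sum_prod_type]
    have h1 : ∀ i : Fin n, (∑ j : Fin n, if j < i then (1:ℕ) else 0) = (i : ℕ) := by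
      intro i
      rw [Finset.sum_boole]
      have : Finset.filter (fun x => x < i) Finset.univ = Finset.Iio i := by
        ext x; simp
      simp [this, Fin.card_Iio]
    simp only [h1]
    rw [Fin.sum_univ_eq_sum_range (fun i => i) n]
    exact Finset.sum_range_id n
  -- every simple minor has no essential variables
  have hsup : sSup {m | ∃ h, SimpleMinor f h ∧ m = ess h} = 0 := by
    have := hgap
    unfold gap at this
    rw [hess] at this
    omega
  have hbdd : BddAbove {m | ∃ h : (Fin n → ZMod k) → ZMod k, SimpleMinor f h ∧ m = ess h} := by
    refine ⟨n, ?_⟩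
    rintro m ⟨h, _, rfl⟩
    exact ess_le' h
  have hminor0 : ∀ i j : Fin n, j < i → ess (ident f i j) = 0 := by
    intro i j hij
    have hmem : ess (ident f i j) ∈
        {m | ∃ h, SimpleMinor f h ∧ m = ess h} :=
      ⟨ident f i j, ⟨i, j, (ne_of_gt hij), hall i, hall j, rfl⟩, rfl⟩
    have := le_csSup hbdd hmem
    omega
  refine ⟨hcard, ?_⟩
  obtain ⟨m, hm⟩ : ∃ m, n = m + 2 := ⟨n - 2, by omega⟩
  subst hm
  unfold cmr
  rw [hess]
  have h1 : ¬ (ess f ≤ 1) := by omega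
  have h2 : ¬ (ess f = 2) := by omega
  show cmrAux (m + 1 + 1) f = (m + 2) * (m + 2 - 1) / 2
  rw [cmrAux]
  rw [if_neg h1, if_neg h2]
  have hterm : ∀ p ∈ Finset.univ.filter
      (fun p : Fin (m+2) × Fin (m+2) => p.2 < p.1 ∧ Essential f p.1 ∧ Essential f p.2),
      cmrAux (m + 1) (ident f p.1 p.2) = 1 := by
    rintro ⟨i, j⟩ hp
    simp only [Finset.mem_filter] at hp
    rw [cmrAux, if_pos (by rw [hminor0 i j hp.2.1]; omega)]
  rw [Finset.sum_congr rfl hterm, Finset.sum_const, smul_eq_mul, mul_one, hcard]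
end
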